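/- arXiv:2311.09001 — 8 statements merged into one kernel-verified Lean document; each statement's English description precedes it below -/
import Mathlib

section
/- Let M be a real symmetric n×n tridiagonal matrix with smallest eigenvalue θ, and suppose all subdiagonal entries m_{j+1,j} are nonzero for j = 1,…,n-1. For k < n, let M_k be the leading principal k×k submatrix of M, with smallest eigenvalue θ_k. Then θ_k > θ (strict inequality). -/
open Matrix Finset

private lemma rayleigh_aux {m : ℕ} (A : Matrix (Fin m) (Fin m) ℝ) (hA : A.IsHermitian)
    (x : Fin m → ℝ) (θ : ℝ) (hθ : ∀ i, θ ≤ hA.eigenvalues i) :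
    θ * (x ⬝ᵥ x) ≤ x ⬝ᵥ (A *ᵥ x) ∧
    (x ⬝ᵥ (A *ᵥ x) = θ * (x ⬝ᵥ x) → A *ᵥ x = θ • x) := by
  classical
  set U : Matrix (Fin m) (Fin m) ℝ := (hA.eigenvectorUnitary : Matrix (Fin m) (Fin m) ℝ) with hU
  have hUU : U * star U = 1 := (Matrix.mem_unitaryGroup_iff).mp hA.eigenvectorUnitary.2
  set y : Fin m → ℝ := (star U) *ᵥ x with hy
  have hxy : U *ᵥ y = x := by rw [hy, mulVec_mulVec, hUU, one_mulVec]
  have hvec : x ᵥ* U = y := by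
    rw [hy, Matrix.star_eq_conjTranspose, conjTranspose_eq_transpose_of_trivial,
      ← vecMul_transpose, transpose_transpose]
  have hspec : A = U * diagonal hA.eigenvalues * star U := by
    have := hA.spectral_theorem
    simpa [RCLike.ofReal_real_eq_id] using this
  have hquad : x ⬝ᵥ (A *ᵥ x) = ∑ i, hA.eigenvalues i * (y i * y i) := by
    conv_lhs => rw [hspec]
    rw [← mulVec_mulVec, ← mulVec_mulVec, dotProduct_mulVec, hvec, ← hy]
    simp [dotProduct, mulVec_diagonal, mul_assoc]
    exact Finset.sum_congr rfl fun i _ => by ring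
  have hnorm : x ⬝ᵥ x = ∑ i, y i * y i := by
    have h2 : x ⬝ᵥ (U *ᵥ y) = y ⬝ᵥ y := by rw [dotProduct_mulVec, hvec]
    rw [hxy] at h2
    rw [h2]; simp [dotProduct]
  have hdiff : x ⬝ᵥ (A *ᵥ x) - θ * (x ⬝ᵥ x) = ∑ i, (hA.eigenvalues i - θ) * (y i * y i) := by
    rw [hquad, hnorm, Finset.mul_sum, ← Finset.sum_sub_distrib]
    congr 1; ext i; ring
  have hterm : ∀ i ∈ Finset.univ, 0 ≤ (hA.eigenvalues i - θ) * (y i * y i) := fun i _ =>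
    mul_nonneg (sub_nonneg.mpr (hθ i)) (mul_self_nonneg _)
  constructor
  · have h0 := Finset.sum_nonneg hterm
    rw [← hdiff] at h0
    linarith
  · intro heq
    have hzero : ∑ i, (hA.eigenvalues i - θ) * (y i * y i) = 0 := by
      rw [← hdiff, heq]; ring
    have hall := (Finset.sum_eq_zero_iff_of_nonneg hterm).mp hzero
    have hDy : (diagonal hA.eigenvalues) *ᵥ y = θ • y := by
      funext i
      have hi := hall i (Finset.mem_univ i)
      rw [mulVec_diagonal]
      rcases eq_or_ne (y i) 0 with h | h
      · simp [h]
      · have hpos := mul_self_pos.mpr h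
        have hge := sub_nonneg.mpr (hθ i)
        have hlam : hA.eigenvalues i = θ := by nlinarith
        simp [Pi.smul_apply, smul_eq_mul, hlam]
    conv_lhs => rw [hspec]
    rw [← mulVec_mulVec, ← mulVec_mulVec, ← hy, hDy, mulVec_smul, hxy]

private lemma sum_extend_zero {n k : ℕ} (h : k ≤ n) (g : Fin n → ℝ)
    (hg : ∀ i : Fin n, k ≤ (i : ℕ) → g i = 0) :
    ∑ i, g i = ∑ i : Fin k, g (Fin.castLE h i) := by
  classical
  symm
  have : ∑ i : Fin k, g (Fin.castLE h i)
      = ∑ i ∈ Finset.univ.map (Fin.castLEEmb h), g i := by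
    rw [Finset.sum_map]; rfl
  rw [this]
  apply Finset.sum_subset (Finset.subset_univ _)
  intro x _ hx
  apply hg
  by_contra hlt
  push_neg at hlt
  exact hx (Finset.mem_map.mpr ⟨⟨(x : ℕ), hlt⟩, Finset.mem_univ _, Fin.ext rfl⟩)

theorem tridiagonal_principal_submatrix_min_eigenvalue_strict
    (n k : ℕ) (hk : 0 < k) (hkn : k < n) (M : Matrix (Fin n) (Fin n) ℝ)
    (hsymm : M.IsHermitian)
    (htri : ∀ i j : Fin n, (i : ℕ) + 1 < j ∨ (j : ℕ) + 1 < i → M i j = 0)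
    (hsub : ∀ i j : Fin n, (j : ℕ) + 1 = (i : ℕ) → M i j ≠ 0)
    (hsymm' : (M.submatrix (Fin.castLE hkn.le) (Fin.castLE hkn.le)).IsHermitian) :
    (⨅ i, hsymm.eigenvalues i) < ⨅ i, hsymm'.eigenvalues i := by
  classical
  haveI : Nonempty (Fin k) := ⟨⟨0, hk⟩⟩
  haveI : Nonempty (Fin n) := ⟨⟨0, hk.trans hkn⟩⟩
  set θ := ⨅ i, hsymm.eigenvalues i with hθdef
  set θk := ⨅ i, hsymm'.eigenvalues i with hθkdef
  have hθle : ∀ i, θ ≤ hsymm.eigenvalues i := fun i =>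
    ciInf_le (Finite.bddBelow_range _) i
  have hθkle : ∀ i, θk ≤ hsymm'.eigenvalues i := fun i =>
    ciInf_le (Finite.bddBelow_range _) i
  obtain ⟨i₀, hi₀⟩ := exists_eq_ciInf_of_finite (f := hsymm'.eigenvalues)
  set v : Fin k → ℝ := ⇑(hsymm'.eigenvectorBasis i₀) with hvdef
  have hv : (M.submatrix (Fin.castLE hkn.le) (Fin.castLE hkn.le)) *ᵥ v = θk • v := by
    rw [hvdef, hsymm'.mulVec_eigenvectorBasis i₀, hi₀]
  have hvne : v ≠ 0 := by
    intro h
    apply hsymm'.eigenvectorBasis.orthonormal.ne_zero i₀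
    ext j
    exact congrFun h j
  -- the zero extension of v to Fin n
  set x : Fin n → ℝ := fun i => if h : (i : ℕ) < k then v ⟨(i : ℕ), h⟩ else 0 with hxdef
  have hxk : ∀ i : Fin n, k ≤ (i : ℕ) → x i = 0 := by
    intro i hi
    simp only [hxdef]
    rw [dif_neg (by omega)]
  have hxc : ∀ j : Fin k, x (Fin.castLE hkn.le j) = v j := by
    intro j
    simp only [hxdef]
    rw [dif_pos (by exact j.isLt)]
    exact congrArg v (Fin.ext rfl)
  -- quadratic form and norm of the extension
  have hq : x ⬝ᵥ (M *ᵥ x)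
      = v ⬝ᵥ ((M.submatrix (Fin.castLE hkn.le) (Fin.castLE hkn.le)) *ᵥ v) := by
    rw [dotProduct, dotProduct,
      sum_extend_zero hkn.le _ (fun i hi => by rw [hxk i hi, zero_mul])]
    refine Finset.sum_congr rfl fun i _ => ?_
    rw [hxc]
    congr 1
    show (M *ᵥ x) (Fin.castLE hkn.le i) = _
    rw [mulVec, dotProduct,
      sum_extend_zero hkn.le _ (fun j hj => by rw [hxk j hj, mul_zero])]
    rw [mulVec, dotProduct]
    exact Finset.sum_congr rfl fun j _ => by rw [hxc]; rfl
  have hn : x ⬝ᵥ x = v ⬝ᵥ v := by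
    rw [dotProduct, dotProduct,
      sum_extend_zero hkn.le _ (fun i hi => by rw [hxk i hi, zero_mul])]
    exact Finset.sum_congr rfl fun i _ => by rw [hxc]
  have hvv : 0 < v ⬝ᵥ v := by
    obtain ⟨j, hj⟩ := Function.ne_iff.mp hvne
    have h1 : v j * v j ≤ ∑ i, v i * v i :=
      Finset.single_le_sum (fun i _ => mul_self_nonneg (v i)) (Finset.mem_univ j)
    have h2 : 0 < v j * v j := mul_self_pos.mpr hj
    rw [dotProduct]
    linarith
  have hvq : v ⬝ᵥ ((M.submatrix (Fin.castLE hkn.le) (Fin.castLE hkn.le)) *ᵥ v)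
      = θk * (v ⬝ᵥ v) := by
    rw [hv]
    simp [dotProduct, Finset.mul_sum]
    exact Finset.sum_congr rfl fun i _ => by ring
  -- weak inequality
  have hle : θ ≤ θk := by
    have h1 := (rayleigh_aux M hsymm x θ hθle).1
    rw [hq, hvq, hn] at h1
    nlinarith
  -- strictness
  by_contra hcon
  push_neg at hcon
  have heq : θk = θ := le_antisymm hcon hle
  have hxMx : x ⬝ᵥ (M *ᵥ x) = θ * (x ⬝ᵥ x) := by
    rw [hq, hvq, hn, heq]
  have hMx : M *ᵥ x = θ • x := (rayleigh_aux M hsymm x θ hθle).2 hxMx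
  -- downward induction: x vanishes everywhere
  have key : ∀ d : ℕ, ∀ i : Fin n, k - d ≤ (i : ℕ) → x i = 0 := by
    intro d
    induction d with
    | zero => intro i hi; exact hxk i (by omega)
    | succ d ih =>
      intro i hi
      by_cases hik : k - d ≤ (i : ℕ)
      · exact ih i hik
      push_neg at hik
      have hd : (i : ℕ) + 1 = k - d := by omega
      have hr : (i : ℕ) + 1 < n := by omega
      set r : Fin n := ⟨(i : ℕ) + 1, hr⟩ with hrdef
      have hrval : (r : ℕ) = (i : ℕ) + 1 := rfl
      have hxr : x r = 0 := ih r (by omega)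
      have hrow := congrFun hMx r
      have hexp : (M *ᵥ x) r = ∑ j, M r j * x j := by
        rw [mulVec, dotProduct]
      have hsum : ∑ j, M r j * x j = M r i * x i := by
        rw [Finset.sum_eq_single i]
        · intro j _ hj
          rcases lt_trichotomy (j : ℕ) (i : ℕ) with h1 | h1 | h1
          · rw [htri r j (Or.inr (by omega)), zero_mul]
          · exact absurd (Fin.ext h1) hj
          · rw [ih j (by omega), mul_zero]
        · intro h; exact absurd (Finset.mem_univ i) h
      have hzero : M r i * x i = 0 := by
        rw [← hsum, ← hexp, hrow, Pi.smul_apply, smul_eq_mul, hxr, mul_zero]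
      have hMri : M r i ≠ 0 := hsub r i (by omega)
      exact (mul_eq_zero.mp hzero).resolve_left hMri
  apply hvne
  funext j
  rw [← hxc j]
  exact key k (Fin.castLE hkn.le j) (by omega)
end

section
/- Let Γ be a distance-regular graph with valency k, diameter D ≥ 3, intersection numbers a_1, c_2, and smallest eigenvalue at least -m for an integer m ≥ 2. Then k < m(a_1 + m) - (m-1)c_2. -/
open scoped Classical

/-- A distance-regular graph: a connected graph together with its diameter and
intersection numbers `b i`, `c i`. -/
structure DRG (V : Type) [Fintype V] [DecidableEq V] where
  G : SimpleGraph V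
  diam : ℕ
  b : ℕ → ℕ
  c : ℕ → ℕ
  conn : G.Connected
  dist_le : ∀ x y : V, G.dist x y ≤ diam
  dist_attained : ∃ x y : V, G.dist x y = diam
  c_one : c 1 = 1
  count_b : ∀ (i : ℕ) (x y : V), G.dist x y = i →
    Nat.card {z : V // G.Adj y z ∧ G.dist x z = i + 1} = b i
  count_c : ∀ (i : ℕ) (x y : V), 1 ≤ i → G.dist x y = i →
    Nat.card {z : V // G.Adj y z ∧ G.dist x z = i - 1} = c i

namespace DRG

variable {V : Type} [Fintype V] [DecidableEq V]

/-- The adjacency matrix of the graph, over `ℝ`. -/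
noncomputable def adjMat (Γ : DRG V) : Matrix V V ℝ := SimpleGraph.adjMatrix ℝ Γ.G

/-- `θ` is an eigenvalue of the adjacency matrix of `Γ`. -/
def IsEig (Γ : DRG V) (θ : ℝ) : Prop :=
  ∃ v : V → ℝ, v ≠ 0 ∧ Γ.adjMat.mulVec v = θ • v

/-- The valency `k = b 0`. -/
def k (Γ : DRG V) : ℕ := Γ.b 0

/-- The intersection number `a 1 = k - b 1 - c 1` (as an integer). -/
def a1 (Γ : DRG V) : ℤ := (Γ.k : ℤ) - Γ.b 1 - 1

/-- `Γ` is geometric: there is a collection of Delsarte cliques such that every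
edge lies in a unique member. -/
def IsGeometric (Γ : DRG V) : Prop :=
  ∃ θmin : ℝ, Γ.IsEig θmin ∧ (∀ θ : ℝ, Γ.IsEig θ → θmin ≤ θ) ∧
    ∃ 𝒞 : Set (Finset V),
      (∀ C ∈ 𝒞, Γ.G.IsClique (C : Set V) ∧ (C.card : ℝ) = 1 + (Γ.k : ℝ) / |θmin|) ∧
      ∀ x y : V, Γ.G.Adj x y → ∃! C, C ∈ 𝒞 ∧ x ∈ C ∧ y ∈ C

end DRG

section Aux

open Matrix

variable {V : Type} [Fintype V] [DecidableEq V]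

private lemma aux_psd (Γ : DRG V) (m : ℝ)
    (heig : ∀ θ : ℝ, Γ.IsEig θ → -m ≤ θ) :
    ∀ x : V → ℝ, 0 ≤ x ⬝ᵥ (Γ.adjMat *ᵥ x) + m * (x ⬝ᵥ x) := by
  set A := Γ.adjMat with hAdef
  set B := A + m • (1 : Matrix V V ℝ) with hBdef
  have hBA : ∀ v : V → ℝ, B *ᵥ v = A *ᵥ v + m • v := by
    intro v
    rw [hBdef, Matrix.add_mulVec, Matrix.smul_mulVec, Matrix.one_mulVec]
  have hB : B.IsHermitian := by
    have hA : A.IsHermitian := by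
      rw [Matrix.IsHermitian, Matrix.conjTranspose_eq_transpose_of_trivial, hAdef,
        DRG.adjMat, SimpleGraph.transpose_adjMatrix]
    rw [Matrix.IsHermitian, Matrix.conjTranspose_add, Matrix.conjTranspose_smul,
      Matrix.conjTranspose_one, hA, star_trivial]
  have hpsd : B.PosSemidef := by
    apply (Matrix.IsHermitian.posSemidef_iff_eigenvalues_nonneg hB).mpr
    intro i
    have h1 := hB.mulVec_eigenvectorBasis i
    have hne : (⇑(hB.eigenvectorBasis i) : V → ℝ) ≠ 0 := by
      have := hB.eigenvectorBasis.orthonormal.ne_zero i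
      intro hc; apply this; ext j; exact congrFun hc j
    rw [hBA] at h1
    have hAe : A.mulVec (⇑(hB.eigenvectorBasis i))
        = (hB.eigenvalues i - m) • ⇑(hB.eigenvectorBasis i) := by
      rw [sub_smul, eq_sub_iff_add_eq]
      exact h1
    have := heig _ ⟨_, hne, hAe⟩
    rw [Pi.zero_apply]
    linarith
  intro x
  have h2 := hpsd.dotProduct_mulVec_nonneg x
  simp only [star_trivial] at h2
  rw [hBA] at h2
  simpa [dotProduct_add, dotProduct_smul, smul_eq_mul,
    dotProduct_comm x (m • x)] using h2

private lemma aux_dist_getVert_le {G : SimpleGraph V} (hconn : G.Connected) {p q : V}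
    (w : G.Walk p q) (i : ℕ) :
    G.dist p (w.getVert i) ≤ i := by
  induction w generalizing i with
  | nil => simp [SimpleGraph.Walk.getVert, SimpleGraph.dist_self]
  | cons h w' ih =>
    cases i with
    | zero => simp [SimpleGraph.Walk.getVert, SimpleGraph.dist_self]
    | succ n =>
      rw [SimpleGraph.Walk.getVert_cons_succ]
      calc G.dist _ _ ≤ G.dist _ _ + G.dist _ _ := hconn.dist_triangle
        _ ≤ 1 + n := by
            gcongr
            · exact SimpleGraph.dist_le h.toWalk
            · exact ih n
        _ = n + 1 := by omega

private lemma aux_dist_getVert_right_le {G : SimpleGraph V} {p q : V}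
    (w : G.Walk p q) (i : ℕ) :
    G.dist (w.getVert i) q ≤ w.length - i := by
  induction w generalizing i with
  | nil => simp [SimpleGraph.Walk.getVert, SimpleGraph.dist_self]
  | cons h w' ih =>
    cases i with
    | zero =>
      simp only [SimpleGraph.Walk.getVert]
      calc G.dist _ _ ≤ _ := SimpleGraph.dist_le (SimpleGraph.Walk.cons h w')
        _ = (SimpleGraph.Walk.cons h w').length - 0 := by omega
    | succ n =>
      rw [SimpleGraph.Walk.getVert_cons_succ]
      calc G.dist _ _ ≤ w'.length - n := ih n
        _ ≤ (SimpleGraph.Walk.cons h w').length - (n+1) := by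
            rw [SimpleGraph.Walk.length_cons]; omega

private lemma aux_exists_mid {G : SimpleGraph V} (hconn : G.Connected) (p q : V) {n i : ℕ}
    (h : G.dist p q = n) (hi : i ≤ n) : ∃ v, G.dist p v = i ∧ G.dist v q = n - i := by
  obtain ⟨w, hw⟩ := hconn.exists_walk_length_eq_dist p q
  refine ⟨w.getVert i, ?_, ?_⟩ <;>
  · have h1 := aux_dist_getVert_le hconn w i
    have h2 := aux_dist_getVert_right_le w i
    rw [hw, h] at h2
    have h3 := SimpleGraph.Connected.dist_triangle hconn (u := p) (v := w.getVert i) (w := q)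
    rw [h] at h3
    omega

private lemma aux_natcard_eq (p : V → Prop) :
    Nat.card {v // p v} = (Finset.univ.filter p).card := by
  rw [Nat.card_eq_fintype_card]; exact Fintype.card_subtype p

private lemma aux_dist_zero_iff {G : SimpleGraph V} (hconn : G.Connected) {u v : V} :
    G.dist u v = 0 ↔ u = v := by
  constructor
  · intro h
    by_contra hne
    have := hconn.pos_dist_of_ne hne
    omega
  · rintro rfl; exact SimpleGraph.dist_self

private lemma aux_key_count (Γ : DRG V) {x y z : V}
    (hxy : Γ.G.Adj x y) (hxz : Γ.G.Adj x z) (hyz2 : Γ.G.dist y z = 2) :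
    ((Finset.univ.filter (fun v => Γ.G.Adj z v ∧ Γ.G.Adj x v ∧ Γ.G.dist y v = 2) : Finset V).card : ℤ)
      - ((Finset.univ.filter (fun v => Γ.G.Adj z v ∧ Γ.G.Adj y v ∧ Γ.G.dist x v = 2) : Finset V).card : ℤ)
      = Γ.a1 + 1 - Γ.c 2 := by
  set G := Γ.G
  have hconn := Γ.conn
  have hdxz : G.dist x z = 1 := SimpleGraph.dist_eq_one_iff_adj.mpr hxz
  have hdxy : G.dist x y = 1 := SimpleGraph.dist_eq_one_iff_adj.mpr hxy
  set N : Finset V := Finset.univ.filter (fun v => G.Adj z v) with hNdef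
  have hNcard : N.card = Γ.k := by
    have := Γ.count_b 0 z z SimpleGraph.dist_self
    rw [aux_natcard_eq] at this
    rw [hNdef, DRG.k, ← this]
    congr 1
    ext v
    simp only [Finset.mem_filter, Finset.mem_univ, true_and]
    constructor
    · intro h; exact ⟨h, by rw [zero_add]; exact SimpleGraph.dist_eq_one_iff_adj.mpr h⟩
    · intro h; exact h.1
  have hdistx : ∀ v ∈ N, G.dist x v = 0 ∨ G.dist x v = 1 ∨ G.dist x v = 2 := by
    intro v hv
    rw [hNdef, Finset.mem_filter] at hv
    have h1 : G.dist x v ≤ G.dist x z + G.dist z v := hconn.dist_triangle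
    rw [hdxz, SimpleGraph.dist_eq_one_iff_adj.mpr hv.2] at h1
    omega
  have hsplit : ∀ (s : Finset V), (∀ v ∈ s, G.dist x v = 0 ∨ G.dist x v = 1 ∨ G.dist x v = 2) →
      s.card = (s.filter (fun v => G.dist x v = 0)).card + (s.filter (fun v => G.dist x v = 1)).card
        + (s.filter (fun v => G.dist x v = 2)).card := by
    intro s hs
    have h1 := Finset.card_filter_add_card_filter_not (s := s) (p := fun v => G.dist x v = 0)
    have h2 := Finset.card_filter_add_card_filter_not
        (s := s.filter (fun v => ¬ G.dist x v = 0)) (p := fun v => G.dist x v = 1)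
    have e1 : (s.filter (fun v => ¬ G.dist x v = 0)).filter (fun v => G.dist x v = 1)
        = s.filter (fun v => G.dist x v = 1) := by
      ext v
      simp only [Finset.mem_filter]
      constructor
      · rintro ⟨⟨hv, _⟩, h1'⟩; exact ⟨hv, h1'⟩
      · rintro ⟨hv, h1'⟩; exact ⟨⟨hv, by omega⟩, h1'⟩
    have e2 : (s.filter (fun v => ¬ G.dist x v = 0)).filter (fun v => ¬ G.dist x v = 1)
        = s.filter (fun v => G.dist x v = 2) := by
      ext v
      simp only [Finset.mem_filter]
      constructor
      · rintro ⟨⟨hv, h0⟩, h1'⟩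
        exact ⟨hv, by rcases hs v hv with h | h | h <;> omega⟩
      · rintro ⟨hv, h2'⟩; exact ⟨⟨hv, by omega⟩, by omega⟩
    rw [e1, e2] at h2
    omega
  have hb1 : (N.filter (fun v => G.dist x v = 2)).card = Γ.b 1 := by
    have := Γ.count_b 1 x z hdxz
    rw [aux_natcard_eq] at this
    rw [← this, hNdef, Finset.filter_filter]
    congr 1
    ext v
    simp only [Finset.mem_filter, Finset.mem_univ, true_and]
    rfl
  have hN0 : N.filter (fun v => G.dist x v = 0) = {x} := by
    ext v
    simp only [Finset.mem_filter, Finset.mem_singleton, hNdef, Finset.mem_univ, true_and]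
    constructor
    · rintro ⟨_, h0⟩; exact ((aux_dist_zero_iff hconn).mp h0).symm
    · rintro rfl; exact ⟨hxz.symm, SimpleGraph.dist_self⟩
  have eq1 : 1 + (N.filter (fun v => G.dist x v = 1)).card + Γ.b 1 = Γ.k := by
    have := hsplit N hdistx
    rw [hNcard, hN0, hb1] at this
    simp only [Finset.card_singleton] at this
    omega
  set M : Finset V := N.filter (fun v => G.dist y v = 1) with hMdef
  have hMc2 : M.card = Γ.c 2 := by
    have := Γ.count_c 2 y z (by norm_num) hyz2
    rw [aux_natcard_eq] at this
    rw [← this, hMdef, hNdef, Finset.filter_filter]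
    congr 1
    ext v
    simp only [Finset.mem_filter, Finset.mem_univ, true_and]
    rfl
  have hMsub : ∀ v ∈ M, G.dist x v = 0 ∨ G.dist x v = 1 ∨ G.dist x v = 2 := by
    intro v hv
    exact hdistx v (Finset.mem_of_mem_filter v hv)
  have hM0 : M.filter (fun v => G.dist x v = 0) = {x} := by
    ext v
    simp only [hMdef, hNdef, Finset.mem_filter, Finset.mem_singleton, Finset.mem_univ, true_and]
    constructor
    · rintro ⟨_, h0⟩; exact ((aux_dist_zero_iff hconn).mp h0).symm
    · rintro rfl
      exact ⟨⟨hxz.symm, by rw [SimpleGraph.dist_comm]; exact hdxy⟩, SimpleGraph.dist_self⟩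
  have hM2 : M.filter (fun v => G.dist x v = 2)
      = Finset.univ.filter (fun v => G.Adj z v ∧ G.Adj y v ∧ G.dist x v = 2) := by
    ext v
    simp only [hMdef, hNdef, Finset.mem_filter, Finset.mem_univ, true_and]
    constructor
    · rintro ⟨⟨hzv, h1⟩, h2⟩
      exact ⟨hzv, SimpleGraph.dist_eq_one_iff_adj.mp h1, h2⟩
    · rintro ⟨hzv, h1, h2⟩
      exact ⟨⟨hzv, SimpleGraph.dist_eq_one_iff_adj.mpr h1⟩, h2⟩
  have eq2 : 1 + (M.filter (fun v => G.dist x v = 1)).card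
      + (Finset.univ.filter (fun v => G.Adj z v ∧ G.Adj y v ∧ G.dist x v = 2)).card = Γ.c 2 := by
    have := hsplit M hMsub
    rw [hMc2, hM0, hM2] at this
    simp only [Finset.card_singleton] at this
    omega
  set A1 : Finset V := N.filter (fun v => G.dist x v = 1) with hA1def
  have hA1dichot : ∀ v ∈ A1, G.dist y v = 1 ∨ G.dist y v = 2 := by
    intro v hv
    simp only [hA1def, hNdef, Finset.mem_filter, Finset.mem_univ, true_and] at hv
    obtain ⟨hzv, h1⟩ := hv
    have hle : G.dist y v ≤ G.dist y x + G.dist x v := hconn.dist_triangle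
    rw [SimpleGraph.dist_comm] at hdxy
    have hne : G.dist y v ≠ 0 := by
      intro h0
      have : y = v := (aux_dist_zero_iff hconn).mp h0
      subst this
      have : G.dist y z = 1 := SimpleGraph.dist_eq_one_iff_adj.mpr hzv.symm
      omega
    omega
  have hsplitA1 := Finset.card_filter_add_card_filter_not
    (s := A1) (p := fun v => G.dist y v = 1)
  have eA : A1.filter (fun v => G.dist y v = 1) = M.filter (fun v => G.dist x v = 1) := by
    ext v
    simp only [hA1def, hMdef, Finset.mem_filter]
    tauto
  have eB : A1.filter (fun v => ¬ G.dist y v = 1)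
      = Finset.univ.filter (fun v => G.Adj z v ∧ G.Adj x v ∧ G.dist y v = 2) := by
    ext v
    simp only [hA1def, hNdef, Finset.mem_filter, Finset.mem_univ, true_and]
    constructor
    · rintro ⟨⟨hzv, h1⟩, h2⟩
      have hmem : v ∈ A1 := by
        rw [hA1def]
        exact Finset.mem_filter.mpr ⟨Finset.mem_filter.mpr ⟨Finset.mem_univ v, hzv⟩, h1⟩
      have hdi := hA1dichot v hmem
      exact ⟨hzv, SimpleGraph.dist_eq_one_iff_adj.mp h1, by omega⟩
    · rintro ⟨hzv, h1, h2⟩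
      refine ⟨⟨hzv, SimpleGraph.dist_eq_one_iff_adj.mpr h1⟩, by omega⟩
  rw [eA, eB] at hsplitA1
  simp only [DRG.a1, DRG.k] at eq1 eq2 ⊢
  omega

end Aux

set_option maxHeartbeats 2000000 in
open Matrix in
theorem drg_valency_bound_smallest_eigenvalue {V : Type} [Fintype V] [DecidableEq V]
    (Γ : DRG V) (hD : 3 ≤ Γ.diam) (m : ℤ) (hm : 2 ≤ m)
    (heig : ∀ θ : ℝ, Γ.IsEig θ → -(m : ℝ) ≤ θ) :
    (Γ.k : ℤ) < m * (Γ.a1 + m) - (m - 1) * (Γ.c 2 : ℤ) := by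
  by_contra hcon
  push_neg at hcon
  set G := Γ.G with hGdef
  have hconn : G.Connected := Γ.conn
  -- Configuration: vertices y ~ x, z, u with the right distances
  obtain ⟨p, q, hpq⟩ := Γ.dist_attained
  have hpq3 : 3 ≤ G.dist p q := by rw [hGdef, hpq]; exact hD
  obtain ⟨u, hdyu, -⟩ := aux_exists_mid (i := 3) hconn p q rfl hpq3
  set y := p with hy
  obtain ⟨x, hdyx, hdxu'⟩ := aux_exists_mid (i := 1) hconn y u hdyu (by omega)
  have hdxu : G.dist x u = 2 := by rw [hdxu']
  obtain ⟨z, hdxz, hdzu'⟩ := aux_exists_mid (i := 1) hconn x u hdxu (by omega)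
  have hdzu : G.dist z u = 1 := by rw [hdzu']
  have hxy : G.Adj x y := (SimpleGraph.dist_eq_one_iff_adj.mp hdyx).symm
  have hdxy : G.dist x y = 1 := SimpleGraph.dist_eq_one_iff_adj.mpr hxy
  have hxz : G.Adj x z := SimpleGraph.dist_eq_one_iff_adj.mp hdxz
  have hzu : G.Adj z u := SimpleGraph.dist_eq_one_iff_adj.mp hdzu
  have hdyz : G.dist y z = 2 := by
    have h1 : G.dist y z ≤ G.dist y x + G.dist x z := hconn.dist_triangle
    have h2 : G.dist y u ≤ G.dist y z + G.dist z u := hconn.dist_triangle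
    omega
  -- adjacency and distance facts
  have hnxx : ¬ G.Adj x x := G.irrefl
  have hnyy : ¬ G.Adj y y := G.irrefl
  have hnuu : ¬ G.Adj u u := G.irrefl
  have hnxu : ¬ G.Adj x u := by
    intro hadj
    have := SimpleGraph.dist_eq_one_iff_adj.mpr hadj
    omega
  have hnyu : ¬ G.Adj y u := by
    intro hadj
    have := SimpleGraph.dist_eq_one_iff_adj.mpr hadj
    omega
  have hxney : x ≠ y := hxy.ne
  have hxneu : x ≠ u := by
    intro hh; rw [hh] at hdxu; rw [SimpleGraph.dist_self] at hdxu; omega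
  have hyneu : y ≠ u := by
    intro hh; rw [hh] at hdyu; rw [SimpleGraph.dist_self] at hdyu; omega
  -- the two cliques-with-distance sets
  set Sx : Finset V := Finset.univ.filter (fun v => G.Adj x v ∧ G.dist y v = 2) with hSxdef
  set Sy : Finset V := Finset.univ.filter (fun v => G.Adj y v ∧ G.dist x v = 2) with hSydef
  have hSxcard : Sx.card = Γ.b 1 := by
    have := Γ.count_b 1 y x hdyx
    rw [aux_natcard_eq] at this
    rw [hSxdef, ← this]
    congr 1
    ext v
    rw [hGdef]
    simp only [Finset.mem_filter, Finset.mem_univ, true_and]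
  have hSycard : Sy.card = Γ.b 1 := by
    have := Γ.count_b 1 x y hdxy
    rw [aux_natcard_eq] at this
    rw [hSydef, ← this]
    congr 1
    ext v
    rw [hGdef]
    simp only [Finset.mem_filter, Finset.mem_univ, true_and]
  have hmemSx : ∀ {w : V}, w ∈ Sx ↔ (G.Adj x w ∧ G.dist y w = 2) := by
    intro w
    rw [hSxdef]
    simp only [Finset.mem_filter, Finset.mem_univ, true_and]
  have hmemSy : ∀ {w : V}, w ∈ Sy ↔ (G.Adj y w ∧ G.dist x w = 2) := by
    intro w
    rw [hSydef]
    simp only [Finset.mem_filter, Finset.mem_univ, true_and]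
  have hSxSy : ∀ w ∈ Sx, w ∉ Sy := by
    intro w hw hw'
    rw [hmemSx] at hw
    rw [hmemSy] at hw'
    have := SimpleGraph.dist_eq_one_iff_adj.mpr hw.1
    omega
  have hSySx : ∀ w ∈ Sy, w ∉ Sx := by
    intro w hw hw'
    exact hSxSy w hw' hw
  have hxSx : x ∉ Sx := fun hh => hnxx (hmemSx.mp hh).1
  have hySy : y ∉ Sy := fun hh => hnyy (hmemSy.mp hh).1
  have hxSy : x ∉ Sy := by
    intro hh
    have := (hmemSy.mp hh).2
    rw [SimpleGraph.dist_self] at this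
    omega
  have hySx : y ∉ Sx := by
    intro hh
    have := (hmemSx.mp hh).2
    rw [SimpleGraph.dist_self] at this
    omega
  have huSx : u ∉ Sx := fun hh => hnxu (hmemSx.mp hh).1
  have huSy : u ∉ Sy := fun hh => hnyu (hmemSy.mp hh).1
  -- vectors
  set f : V → ℝ := fun v => (if v = x then 1 else 0) - (if v = y then 1 else 0) with hfdef
  set g : V → ℝ := fun v => (if v ∈ Sx then 1 else 0) - (if v ∈ Sy then 1 else 0) with hgdef
  set h : V → ℝ := fun v => if v = u then 1 else 0 with hhdef
  set A := Γ.adjMat with hAdef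
  have hAapp : ∀ (qv : V → ℝ) (v : V), (A *ᵥ qv) v = ∑ w ∈ G.neighborFinset v, qv w := by
    intro qv v
    rw [hAdef, DRG.adjMat]
    exact SimpleGraph.adjMatrix_mulVec_apply _ _ _
  have dotf : ∀ qv : V → ℝ, f ⬝ᵥ qv = qv x - qv y := by
    intro qv
    simp only [dotProduct, hfdef, sub_mul, one_mul, Finset.sum_sub_distrib, ite_mul,
      zero_mul, Finset.sum_ite_eq', Finset.mem_univ, if_true]
  have doth : ∀ qv : V → ℝ, h ⬝ᵥ qv = qv u := by
    intro qv
    simp only [dotProduct, hhdef, ite_mul, one_mul, zero_mul, Finset.sum_ite_eq',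
      Finset.mem_univ, if_true]
  have dotg : ∀ qv : V → ℝ, g ⬝ᵥ qv = (∑ v ∈ Sx, qv v) - ∑ v ∈ Sy, qv v := by
    intro qv
    simp only [dotProduct, hgdef, sub_mul, one_mul, Finset.sum_sub_distrib, ite_mul,
      zero_mul]
    congr 1 <;> rw [Finset.sum_ite_mem, Finset.univ_inter]
  -- mulVec on each piece
  have hAf : ∀ v, (A *ᵥ f) v = (if G.Adj v x then (1:ℝ) else 0) - (if G.Adj v y then 1 else 0) := by
    intro v
    rw [hAapp]
    simp only [hfdef, Finset.sum_sub_distrib, Finset.sum_ite_eq', SimpleGraph.mem_neighborFinset]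
  have hAh : ∀ v, (A *ᵥ h) v = (if G.Adj v u then (1:ℝ) else 0) := by
    intro v
    rw [hAapp]
    simp only [hhdef, Finset.sum_ite_eq', SimpleGraph.mem_neighborFinset]
  have hAg : ∀ v, (A *ᵥ g) v =
      (((G.neighborFinset v).filter (fun w => w ∈ Sx)).card : ℝ)
      - (((G.neighborFinset v).filter (fun w => w ∈ Sy)).card : ℝ) := by
    intro v
    rw [hAapp]
    simp only [hgdef, Finset.sum_sub_distrib, Finset.sum_boole]
  -- symmetry of the form
  have hAsymm : ∀ pv qv : V → ℝ, pv ⬝ᵥ (A *ᵥ qv) = qv ⬝ᵥ (A *ᵥ pv) := by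
    intro pv qv
    have hsA : Aᵀ = A := by
      rw [hAdef, DRG.adjMat]
      exact SimpleGraph.isSymm_adjMatrix G
    rw [Matrix.dotProduct_mulVec, ← Matrix.mulVec_transpose, hsA, dotProduct_comm]
  -- neighborhood/filter identities
  have hNSxx : (G.neighborFinset x).filter (fun w => w ∈ Sx) = Sx := by
    ext w
    simp only [Finset.mem_filter, SimpleGraph.mem_neighborFinset]
    exact ⟨fun hh => hh.2, fun hh => ⟨(hmemSx.mp hh).1, hh⟩⟩
  have hNSyx : (G.neighborFinset x).filter (fun w => w ∈ Sy) = ∅ := by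
    ext w
    simp only [Finset.mem_filter, SimpleGraph.mem_neighborFinset, Finset.notMem_empty,
      iff_false, not_and]
    intro hadj hw
    have := (hmemSy.mp hw).2
    have := SimpleGraph.dist_eq_one_iff_adj.mpr hadj
    omega
  have hNSyy : (G.neighborFinset y).filter (fun w => w ∈ Sy) = Sy := by
    ext w
    simp only [Finset.mem_filter, SimpleGraph.mem_neighborFinset]
    exact ⟨fun hh => hh.2, fun hh => ⟨(hmemSy.mp hh).1, hh⟩⟩
  have hNSxy : (G.neighborFinset y).filter (fun w => w ∈ Sx) = ∅ := by
    ext w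
    simp only [Finset.mem_filter, SimpleGraph.mem_neighborFinset, Finset.notMem_empty,
      iff_false, not_and]
    intro hadj hw
    have h1 := (hmemSx.mp hw).2
    have h2 := SimpleGraph.dist_eq_one_iff_adj.mpr hadj
    omega
  have hNSyu : (G.neighborFinset u).filter (fun w => w ∈ Sy) = ∅ := by
    ext w
    simp only [Finset.mem_filter, SimpleGraph.mem_neighborFinset, Finset.notMem_empty,
      iff_false, not_and]
    intro hadj hw
    have h1 := SimpleGraph.dist_eq_one_iff_adj.mpr (hmemSy.mp hw).1
    have h2 := SimpleGraph.dist_eq_one_iff_adj.mpr hadj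
    have h3 : G.dist y u ≤ G.dist y w + G.dist w u := hconn.dist_triangle
    rw [SimpleGraph.dist_comm] at h2
    omega
  set E : ℕ := ((G.neighborFinset u).filter (fun w => w ∈ Sx)).card with hEdef
  have hE1 : 1 ≤ E := by
    rw [hEdef]
    apply Finset.card_pos.mpr
    refine ⟨z, ?_⟩
    simp only [Finset.mem_filter, SimpleGraph.mem_neighborFinset]
    exact ⟨hzu.symm, hmemSx.mpr ⟨hxz, hdyz⟩⟩
  -- the six form values
  have vff : f ⬝ᵥ (A *ᵥ f) = -2 := by
    rw [dotf, hAf, hAf]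
    rw [if_neg hnxx, if_pos hxy, if_pos hxy.symm, if_neg hnyy]
    norm_num
  have vfg : f ⬝ᵥ (A *ᵥ g) = 2 * (Γ.b 1 : ℝ) := by
    rw [dotf, hAg, hAg, hNSxx, hNSyx, hNSyy, hNSxy]
    rw [hSxcard, hSycard]
    simp
    ring
  have vfh : f ⬝ᵥ (A *ᵥ h) = 0 := by
    rw [dotf, hAh, hAh, if_neg hnxu, if_neg hnyu]
    norm_num
  have vhh : h ⬝ᵥ (A *ᵥ h) = 0 := by
    rw [doth, hAh, if_neg hnuu]
  have vgh : g ⬝ᵥ (A *ᵥ h) = (E : ℝ) := by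
    rw [dotg]
    have e1 : ∑ v ∈ Sx, (A *ᵥ h) v = (E : ℝ) := by
      rw [Finset.sum_congr rfl (fun v _ => hAh v), Finset.sum_boole, hEdef]
      norm_cast
      congr 1
      ext w
      simp only [Finset.mem_filter, SimpleGraph.mem_neighborFinset]
      constructor
      · rintro ⟨hw, hadj⟩; exact ⟨hadj.symm, hw⟩
      · rintro ⟨hadj, hw⟩; exact ⟨hw, hadj.symm⟩
    have e2 : ∑ v ∈ Sy, (A *ᵥ h) v = 0 := by
      rw [Finset.sum_congr rfl (fun v _ => hAh v), Finset.sum_boole]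
      have : Sy.filter (fun w => G.Adj w u) = ∅ := by
        ext w
        simp only [Finset.mem_filter, Finset.notMem_empty, iff_false, not_and]
        intro hw hadj
        have h2 := SimpleGraph.dist_eq_one_iff_adj.mpr hadj
        have h1 := SimpleGraph.dist_eq_one_iff_adj.mpr (hmemSy.mp hw).1
        have h3 : G.dist y u ≤ G.dist y w + G.dist w u := hconn.dist_triangle
        omega
      rw [this]
      simp
    rw [e1, e2, sub_zero]
  have vgg : g ⬝ᵥ (A *ᵥ g) = 2 * (Γ.b 1 : ℝ) * ((Γ.a1 : ℝ) + 1 - (Γ.c 2 : ℝ)) := by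
    rw [dotg]
    have e1 : ∑ v ∈ Sx, (A *ᵥ g) v = (Sx.card : ℝ) * ((Γ.a1 : ℝ) + 1 - (Γ.c 2 : ℝ)) := by
      have hval : ∀ z' ∈ Sx, (A *ᵥ g) z' = ((Γ.a1 : ℝ) + 1 - (Γ.c 2 : ℝ)) := by
        intro z' hz'
        rw [hAg]
        obtain ⟨hxz', hdyz'⟩ := hmemSx.mp hz'
        have key := aux_key_count Γ hxy hxz' hdyz'
        have eqx : (G.neighborFinset z').filter (fun w => w ∈ Sx)
            = Finset.univ.filter (fun v => G.Adj z' v ∧ G.Adj x v ∧ G.dist y v = 2) := by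
          ext w
          simp only [Finset.mem_filter, SimpleGraph.mem_neighborFinset, Finset.mem_univ, true_and]
          rw [hmemSx]
        have eqy : (G.neighborFinset z').filter (fun w => w ∈ Sy)
            = Finset.univ.filter (fun v => G.Adj z' v ∧ G.Adj y v ∧ G.dist x v = 2) := by
          ext w
          simp only [Finset.mem_filter, SimpleGraph.mem_neighborFinset, Finset.mem_univ, true_and]
          rw [hmemSy]
        rw [eqx, eqy]
        have := congrArg (fun t : ℤ => (t : ℝ)) key
        push_cast at this ⊢
        linarith
      rw [Finset.sum_congr rfl hval, Finset.sum_const, nsmul_eq_mul]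
    have e2 : ∑ v ∈ Sy, (A *ᵥ g) v = -((Sy.card : ℝ) * ((Γ.a1 : ℝ) + 1 - (Γ.c 2 : ℝ))) := by
      have hval : ∀ z' ∈ Sy, (A *ᵥ g) z' = -((Γ.a1 : ℝ) + 1 - (Γ.c 2 : ℝ)) := by
        intro z' hz'
        rw [hAg]
        obtain ⟨hyz', hdxz'⟩ := hmemSy.mp hz'
        have key := aux_key_count Γ hxy.symm hyz' hdxz'
        have eqx : (G.neighborFinset z').filter (fun w => w ∈ Sx)
            = Finset.univ.filter (fun v => G.Adj z' v ∧ G.Adj x v ∧ G.dist y v = 2) := by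
          ext w
          simp only [Finset.mem_filter, SimpleGraph.mem_neighborFinset, Finset.mem_univ, true_and]
          rw [hmemSx]
        have eqy : (G.neighborFinset z').filter (fun w => w ∈ Sy)
            = Finset.univ.filter (fun v => G.Adj z' v ∧ G.Adj y v ∧ G.dist x v = 2) := by
          ext w
          simp only [Finset.mem_filter, SimpleGraph.mem_neighborFinset, Finset.mem_univ, true_and]
          rw [hmemSy]
        rw [eqx, eqy]
        have := congrArg (fun t : ℤ => (t : ℝ)) key
        push_cast at this ⊢
        linarith
      rw [Finset.sum_congr rfl hval, Finset.sum_const, nsmul_eq_mul, mul_neg]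
    rw [e1, e2, hSxcard, hSycard]
    ring
  -- the six dot products
  have dff : f ⬝ᵥ f = 2 := by
    rw [dotf, hfdef]
    simp [hxney, Ne.symm hxney]
    norm_num
  have dfg : f ⬝ᵥ g = 0 := by
    rw [dotf, hgdef]
    simp [hxSx, hxSy, hySx, hySy]
  have dfh : f ⬝ᵥ h = 0 := by
    rw [dotf, hhdef]
    simp [hxneu, hyneu]
  have dgg : g ⬝ᵥ g = 2 * (Γ.b 1 : ℝ) := by
    rw [dotg]
    have e1 : ∑ v ∈ Sx, g v = (Sx.card : ℝ) := by
      have hval : ∀ v ∈ Sx, g v = 1 := by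
        intro v hv
        rw [hgdef]
        simp [hv, hSxSy v hv]
      rw [Finset.sum_congr rfl hval, Finset.sum_const, nsmul_eq_mul, mul_one]
    have e2 : ∑ v ∈ Sy, g v = -(Sy.card : ℝ) := by
      have hval : ∀ v ∈ Sy, g v = -1 := by
        intro v hv
        rw [hgdef]
        simp [hv, hSySx v hv]
      rw [Finset.sum_congr rfl hval, Finset.sum_const, nsmul_eq_mul, mul_neg_one]
    rw [e1, e2, hSxcard, hSycard]
    ring
  have dgh : g ⬝ᵥ h = 0 := by
    rw [dotg]
    have e1 : ∑ v ∈ Sx, h v = 0 := by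
      apply Finset.sum_eq_zero
      intro v hv
      simp only [hhdef]
      rw [if_neg]
      intro hh
      rw [hh] at hv
      exact huSx hv
    have e2 : ∑ v ∈ Sy, h v = 0 := by
      apply Finset.sum_eq_zero
      intro v hv
      simp only [hhdef]
      rw [if_neg]
      intro hh
      rw [hh] at hv
      exact huSy hv
    rw [e1, e2, sub_zero]
  have dhh : h ⬝ᵥ h = 1 := by
    rw [doth]
    simp [hhdef]
  -- combine
  set α : ℝ := -((Γ.b 1 : ℝ) * m) with hα
  set β : ℝ := ((m : ℝ) - 1) * m with hβ
  set γ : ℝ := -((E : ℝ) * ((m : ℝ) - 1)) with hγ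
  set wv : V → ℝ := α • f + β • g + γ • h with hwv
  have hQ := aux_psd Γ m (by exact_mod_cast heig) wv
  have hAw : A *ᵥ wv = α • (A *ᵥ f) + β • (A *ᵥ g) + γ • (A *ᵥ h) := by
    rw [hwv]
    simp [Matrix.mulVec_add, Matrix.mulVec_smul]
  have hgf : g ⬝ᵥ (A *ᵥ f) = f ⬝ᵥ (A *ᵥ g) := hAsymm g f
  have hhf : h ⬝ᵥ (A *ᵥ f) = f ⬝ᵥ (A *ᵥ h) := hAsymm h f
  have hhg : h ⬝ᵥ (A *ᵥ g) = g ⬝ᵥ (A *ᵥ h) := hAsymm h g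
  have hQ1 : wv ⬝ᵥ (A *ᵥ wv) =
      α^2 * (-2) + 2*(α*β) * (2*(Γ.b 1 : ℝ)) + β^2 * (2 * (Γ.b 1 : ℝ) * ((Γ.a1 : ℝ) + 1 - (Γ.c 2 : ℝ)))
        + 2*(β*γ) * (E : ℝ) := by
    rw [hAw, hwv]
    simp only [add_dotProduct, dotProduct_add, smul_dotProduct,
      dotProduct_smul, smul_eq_mul]
    rw [hgf, hhf, hhg, vff, vfg, vfh, vgg, vgh, vhh]
    ring
  have hQ2 : wv ⬝ᵥ wv = α^2 * 2 + β^2 * (2*(Γ.b 1 : ℝ)) + γ^2 := by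
    rw [hwv]
    simp only [add_dotProduct, dotProduct_add, smul_dotProduct,
      dotProduct_smul, smul_eq_mul]
    rw [dotProduct_comm g f, dotProduct_comm h f, dotProduct_comm h g]
    rw [dff, dfg, dfh, dgg, dgh, dhh]
    ring
  rw [hQ1, hQ2] at hQ
  -- final arithmetic contradiction
  have hPb : ((m : ℝ) - 1) * ((m : ℝ) + (Γ.a1 : ℝ) + 1 - (Γ.c 2 : ℝ)) ≤ (Γ.b 1 : ℝ) := by
    have hk : (Γ.k : ℤ) = Γ.a1 + Γ.b 1 + 1 := by rw [DRG.a1]; ring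
    have hZ : (m - 1) * (m + Γ.a1 + 1 - Γ.c 2) ≤ (Γ.b 1 : ℤ) := by nlinarith [hcon, hk]
    exact_mod_cast hZ
  have hmR : (2 : ℝ) ≤ (m : ℝ) := by exact_mod_cast hm
  have hER : (1 : ℝ) ≤ (E : ℝ) := by exact_mod_cast hE1
  have hb1R : (0 : ℝ) ≤ (Γ.b 1 : ℝ) := Nat.cast_nonneg _
  rw [hα, hβ, hγ] at hQ
  have hsub : (0:ℝ) ≤ (Γ.b 1 : ℝ) - ((m:ℝ)-1)*((m:ℝ) + (Γ.a1:ℝ) + 1 - (Γ.c 2:ℝ)) :=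
    sub_nonneg.mpr hPb
  have h1 : 0 ≤ 2*((m:ℝ)-1) * (m:ℝ)^2 * (Γ.b 1 : ℝ)
      * ((Γ.b 1 : ℝ) - ((m:ℝ)-1)*((m:ℝ) + (Γ.a1:ℝ) + 1 - (Γ.c 2:ℝ))) := by
    apply mul_nonneg (mul_nonneg (mul_nonneg (by linarith : (0:ℝ) ≤ 2*((m:ℝ)-1))
      (sq_nonneg _)) hb1R) hsub
  have h2 : 0 < (m:ℝ) * (E:ℝ)^2 * ((m:ℝ)-1)^2 := by
    apply mul_pos (mul_pos (by linarith : (0:ℝ) < (m:ℝ))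
      (by nlinarith : (0:ℝ) < (E:ℝ)^2)) (by nlinarith : (0:ℝ) < ((m:ℝ)-1)^2)
  linarith [hQ, h1, h2]
end

section
/- Any clique C in a distance-regular graph Γ with valency k and smallest eigenvalue θ_min < 0 satisfies |V(C)| ≤ 1 + k/|θ_min| (the Delsarte bound). -/
open scoped Classical

namespace DRG

variable {V : Type} [Fintype V] [DecidableEq V]

section Aux
variable (Γ : DRG V)

lemma count_fiber (x y : V) (j : ℕ) :
    ((Γ.G.neighborFinset y).filter (fun z => Γ.G.dist x z = j)).card
      = Nat.card {z : V // Γ.G.Adj y z ∧ Γ.G.dist x z = j} := by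
  rw [Nat.card_eq_fintype_card, Fintype.card_subtype]
  congr 1
  ext z
  simp

lemma degree_eq (y : V) : (Γ.G.neighborFinset y).card = Γ.k := by
  have h := Γ.count_b 0 y y (SimpleGraph.dist_self ..)
  rw [← Γ.count_fiber y y 1] at h
  show _ = Γ.b 0
  rw [← h]
  congr 1
  ext z
  simp [SimpleGraph.dist_eq_one_iff_adj]

lemma walk_entry (m : ℕ) : ∃ w : ℕ → ℝ, ∀ x y : V,
    (Γ.adjMat ^ m) x y = w (Γ.G.dist x y) := by
  induction m with
  | zero =>
    refine ⟨fun i => if i = 0 then 1 else 0, fun x y => ?_⟩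
    rw [pow_zero]
    beta_reduce
    by_cases h : x = y
    · subst h; simp [Matrix.one_apply, SimpleGraph.dist_self]
    · rw [Matrix.one_apply_ne h, eq_comm, if_neg]
      rw [Γ.conn.dist_eq_zero_iff]
      exact h
  | succ m ih =>
    obtain ⟨w, hw⟩ := ih
    refine ⟨fun i => if i = 0 then (Γ.k : ℝ) * w 1
      else (Γ.c i : ℝ) * w (i-1) + ((Γ.k : ℝ) - Γ.c i - Γ.b i) * w i + (Γ.b i : ℝ) * w (i+1),
      fun x y => ?_⟩
    have hsum : (Γ.adjMat ^ (m+1)) x y = ∑ z ∈ Γ.G.neighborFinset y, w (Γ.G.dist x z) := by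
      rw [pow_succ, Matrix.mul_apply]
      have : ∀ z, (Γ.adjMat ^ m) x z * Γ.adjMat z y
          = if Γ.G.Adj y z then w (Γ.G.dist x z) else 0 := by
        intro z
        rw [hw x z]
        show _ * (SimpleGraph.adjMatrix ℝ Γ.G) z y = _
        rw [SimpleGraph.adjMatrix_apply]
        by_cases h : Γ.G.Adj y z
        · rw [if_pos h, if_pos h.symm, mul_one]
        · rw [if_neg h, if_neg (fun hzy => h hzy.symm), mul_zero]
      rw [Finset.sum_congr rfl fun z _ => this z, Finset.sum_ite, Finset.sum_const_zero, add_zero]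
      apply Finset.sum_congr ?_ (fun _ _ => rfl)
      ext z; simp
    rw [hsum]
    beta_reduce
    -- distance constraints for neighbors
    have hcon : ∀ z ∈ Γ.G.neighborFinset y,
        Γ.G.dist x z ≤ Γ.G.dist x y + 1 ∧ Γ.G.dist x y ≤ Γ.G.dist x z + 1 := by
      intro z hz
      rw [SimpleGraph.mem_neighborFinset] at hz
      have h1 : Γ.G.dist y z = 1 := SimpleGraph.dist_eq_one_iff_adj.mpr hz
      have h2 : Γ.G.dist z y = 1 := SimpleGraph.dist_eq_one_iff_adj.mpr hz.symm
      constructor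
      · calc Γ.G.dist x z ≤ Γ.G.dist x y + Γ.G.dist y z := Γ.conn.dist_triangle
          _ = Γ.G.dist x y + 1 := by rw [h1]
      · calc Γ.G.dist x y ≤ Γ.G.dist x z + Γ.G.dist z y := Γ.conn.dist_triangle
          _ = Γ.G.dist x z + 1 := by rw [h2]
    rcases Nat.eq_zero_or_pos (Γ.G.dist x y) with h0 | hpos
    · rw [h0, if_pos rfl]
      have hx : x = y := Γ.conn.dist_eq_zero_iff.mp h0
      subst hx
      have : ∀ z ∈ Γ.G.neighborFinset x, w (Γ.G.dist x z) = w 1 := by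
        intro z hz
        rw [SimpleGraph.mem_neighborFinset] at hz
        rw [SimpleGraph.dist_eq_one_iff_adj.mpr hz]
      rw [Finset.sum_congr rfl this, Finset.sum_const, Γ.degree_eq, nsmul_eq_mul]
    · obtain ⟨j, hj⟩ : ∃ j, Γ.G.dist x y = j + 1 :=
        ⟨Γ.G.dist x y - 1, by omega⟩
      rw [hj, if_neg (by omega)]
      set N := Γ.G.neighborFinset y with hN
      have hsplit1 := Finset.sum_filter_add_sum_filter_not N (fun z => Γ.G.dist x z = j)
        (fun z => w (Γ.G.dist x z))
      have hsplit2 := Finset.sum_filter_add_sum_filter_not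
        (N.filter (fun z => ¬ Γ.G.dist x z = j)) (fun z => Γ.G.dist x z = j + 1)
        (fun z => w (Γ.G.dist x z))
      have hP : ∑ z ∈ N.filter (fun z => Γ.G.dist x z = j), w (Γ.G.dist x z)
          = ((N.filter (fun z => Γ.G.dist x z = j)).card : ℝ) * w j := by
        rw [Finset.sum_congr rfl (fun z hz => ?_), Finset.sum_const, nsmul_eq_mul]
        rw [Finset.mem_filter] at hz
        rw [hz.2]
      have hQeq : (N.filter (fun z => ¬ Γ.G.dist x z = j)).filter (fun z => Γ.G.dist x z = j + 1)
          = N.filter (fun z => Γ.G.dist x z = j + 1) := by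
        ext z
        simp only [Finset.mem_filter]
        constructor
        · tauto
        · intro h; exact ⟨⟨h.1, by omega⟩, h.2⟩
      have hQ : ∑ z ∈ (N.filter (fun z => ¬ Γ.G.dist x z = j)).filter
            (fun z => Γ.G.dist x z = j + 1), w (Γ.G.dist x z)
          = ((N.filter (fun z => Γ.G.dist x z = j + 1)).card : ℝ) * w (j+1) := by
        rw [hQeq, Finset.sum_congr rfl (fun z hz => ?_), Finset.sum_const, nsmul_eq_mul]
        rw [Finset.mem_filter] at hz
        rw [hz.2]
      have hReq : (N.filter (fun z => ¬ Γ.G.dist x z = j)).filter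
            (fun z => ¬ Γ.G.dist x z = j + 1)
          = N.filter (fun z => Γ.G.dist x z = j + 2) := by
        ext z
        simp only [Finset.mem_filter]
        constructor
        · rintro ⟨⟨hz, hnp⟩, hnq⟩
          refine ⟨hz, ?_⟩
          have := hcon z hz
          omega
        · intro h
          exact ⟨⟨h.1, by omega⟩, by omega⟩
      have hR : ∑ z ∈ (N.filter (fun z => ¬ Γ.G.dist x z = j)).filter
            (fun z => ¬ Γ.G.dist x z = j + 1), w (Γ.G.dist x z)
          = ((N.filter (fun z => Γ.G.dist x z = j + 2)).card : ℝ) * w (j+2) := by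
        rw [hReq, Finset.sum_congr rfl (fun z hz => ?_), Finset.sum_const, nsmul_eq_mul]
        rw [Finset.mem_filter] at hz
        rw [hz.2]
      have hcardP : (N.filter (fun z => Γ.G.dist x z = j)).card = Γ.c (j+1) := by
        have h2 := Γ.count_c (j+1) x y (by omega) hj
        rw [Nat.add_sub_cancel] at h2
        rw [hN, Γ.count_fiber x y j]
        exact h2
      have hcardR : (N.filter (fun z => Γ.G.dist x z = j + 2)).card = Γ.b (j+1) := by
        rw [hN, Γ.count_fiber x y (j+2)]
        exact Γ.count_b (j+1) x y hj
      have hcardsum : (N.filter (fun z => Γ.G.dist x z = j)).card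
          + (((N.filter (fun z => ¬ Γ.G.dist x z = j)).filter
              (fun z => Γ.G.dist x z = j + 1)).card
          + ((N.filter (fun z => ¬ Γ.G.dist x z = j)).filter
              (fun z => ¬ Γ.G.dist x z = j + 1)).card) = Γ.k := by
        rw [Finset.card_filter_add_card_filter_not,
          Finset.card_filter_add_card_filter_not]
        exact Γ.degree_eq y
      have hcardQ : ((N.filter (fun z => Γ.G.dist x z = j + 1)).card : ℝ)
          = (Γ.k : ℝ) - Γ.c (j+1) - Γ.b (j+1) := by
        rw [hQeq, hReq, hcardP, hcardR] at hcardsum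
        have : (N.filter (fun z => Γ.G.dist x z = j + 1)).card = Γ.k - Γ.c (j+1) - Γ.b (j+1) := by
          omega
        rw [this, Nat.cast_sub (by omega), Nat.cast_sub (by omega)]
      rw [Nat.add_sub_cancel, ← hsplit1, ← hsplit2, hP, hQ, hR, hcardP, hcardQ, hcardR]
      ring

end Aux
end DRG

section MatAux
variable {V : Type} [Fintype V] [DecidableEq V]

lemma myconj_pow (U D : Matrix V V ℝ) (hU : U * star U = 1) (hU2 : star U * U = 1) (n : ℕ) :
    (U * D * star U) ^ n = U * D ^ n * star U := by
  induction n with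
  | zero => rw [pow_zero, pow_zero, mul_one, hU]
  | succ n ih =>
    rw [pow_succ, ih, pow_succ]
    calc U * D ^ n * star U * (U * D * star U)
        = U * D ^ n * (star U * U) * (D * star U) := by
          simp only [mul_assoc]
      _ = U * (D ^ n * D) * star U := by rw [hU2]; simp only [mul_one, mul_assoc]

lemma myconj_aeval (U D : Matrix V V ℝ) (hU : U * star U = 1) (hU2 : star U * U = 1)
    (p : Polynomial ℝ) :
    Polynomial.aeval (U * D * star U) p = U * Polynomial.aeval D p * star U := by
  induction p using Polynomial.induction_on' with
  | add p q hp hq => rw [map_add, map_add, hp, hq, mul_add, add_mul]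
  | monomial n a =>
    rw [Polynomial.aeval_monomial, Polynomial.aeval_monomial, myconj_pow U D hU hU2,
      Algebra.algebraMap_eq_smul_one]
    simp only [smul_mul_assoc, one_mul, mul_smul_comm]

lemma myaeval_diag (d : V → ℝ) (p : Polynomial ℝ) :
    Polynomial.aeval (Matrix.diagonal d) p
      = Matrix.diagonal (fun i => Polynomial.eval (d i) p) := by
  induction p using Polynomial.induction_on' with
  | add p q hp hq =>
    rw [map_add, hp, hq, Matrix.diagonal_add]
    simp only [Polynomial.eval_add]
  | monomial n a =>
    rw [Polynomial.aeval_monomial, Matrix.diagonal_pow, Algebra.algebraMap_eq_smul_one,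
      smul_mul_assoc, one_mul]
    ext i j
    by_cases h : i = j
    · subst h; simp [Polynomial.eval_monomial]
    · simp [Matrix.diagonal_apply_ne _ h, h]

end MatAux

theorem delsarte_clique_bound {V : Type} [Fintype V] [DecidableEq V]
    (Γ : DRG V) (θmin : ℝ) (hEig : Γ.IsEig θmin)
    (hmin : ∀ θ : ℝ, Γ.IsEig θ → θmin ≤ θ) (hneg : θmin < 0)
    (C : Finset V) (hC : Γ.G.IsClique (C : Set V)) :
    (C.card : ℝ) ≤ 1 + (Γ.k : ℝ) / |θmin| := by
  classical
  obtain ⟨v, hv0, hvA⟩ := hEig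
  have hVne : Nonempty V := by
    by_contra h
    exact hv0 (funext fun x => absurd ⟨x⟩ h)
  set A := Γ.adjMat with hAdef
  have hA : A.IsHermitian := by
    show A.conjTranspose = A
    rw [Matrix.conjTranspose_eq_transpose_of_trivial]
    exact SimpleGraph.isSymm_adjMatrix Γ.G
  set U : Matrix V V ℝ := (Matrix.IsHermitian.eigenvectorUnitary hA : Matrix V V ℝ) with hUdef
  have hU : U * star U = 1 :=
    Matrix.mem_unitaryGroup_iff.mp (Matrix.IsHermitian.eigenvectorUnitary hA).2
  have hU2 : star U * U = 1 :=
    Matrix.mem_unitaryGroup_iff'.mp (Matrix.IsHermitian.eigenvectorUnitary hA).2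
  set lam := hA.eigenvalues with hlam
  have hspec : A = U * Matrix.diagonal lam * star U := by
    have h := hA.spectral_theorem
    rwa [show (RCLike.ofReal ∘ lam : V → ℝ) = lam by
      rw [RCLike.ofReal_real_eq_id, Function.id_comp]] at h
  -- θmin is attained as an eigenvalue index
  obtain ⟨i0, hi0⟩ : ∃ i, lam i = θmin := by
    set w := Matrix.mulVec (star U) v with hwdef
    have hw0 : w ≠ 0 := by
      intro h
      apply hv0
      have hv : Matrix.mulVec U w = v := by
        rw [hwdef, Matrix.mulVec_mulVec, hU, Matrix.one_mulVec]
      rw [h, Matrix.mulVec_zero] at hv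
      exact hv.symm
    have hUA : star U * A = Matrix.diagonal lam * star U := by
      rw [hspec]
      simp only [← mul_assoc, hU2, one_mul]
    have hDw : Matrix.mulVec (Matrix.diagonal lam) w = θmin • w := by
      rw [hwdef, Matrix.mulVec_mulVec, ← hUA, ← Matrix.mulVec_mulVec, hvA,
        Matrix.mulVec_smul]
    obtain ⟨i, hi⟩ : ∃ i, w i ≠ 0 := Function.ne_iff.mp hw0
    refine ⟨i, ?_⟩
    have h1 := congrFun hDw i
    rw [Matrix.mulVec_diagonal] at h1
    have h2 : (θmin • w) i = θmin * w i := rfl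
    rw [h2] at h1
    exact mul_right_cancel₀ hi h1
  -- the interpolation polynomial
  set S := (Finset.univ.image lam).erase θmin with hS
  set p : Polynomial ℝ :=
    ∏ μ ∈ S, (Polynomial.C (θmin - μ)⁻¹ * (Polynomial.X - Polynomial.C μ)) with hp
  have heval : ∀ i, Polynomial.eval (lam i) p = if lam i = θmin then (1:ℝ) else 0 := by
    intro i
    rw [hp, Polynomial.eval_prod]
    by_cases h : lam i = θmin
    · rw [if_pos h]
      apply Finset.prod_eq_one
      intro μ hμ
      have hne : μ ≠ θmin := Finset.ne_of_mem_erase hμ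
      rw [Polynomial.eval_mul, Polynomial.eval_C, Polynomial.eval_sub, Polynomial.eval_X,
        Polynomial.eval_C, h]
      exact inv_mul_cancel₀ (sub_ne_zero.mpr (Ne.symm hne))
    · rw [if_neg h]
      apply Finset.prod_eq_zero (i := lam i)
      · rw [hS]
        exact Finset.mem_erase.mpr ⟨h, Finset.mem_image_of_mem _ (Finset.mem_univ i)⟩
      · simp
  set E := Polynomial.aeval A p with hE
  set d : V → ℝ := fun i => if lam i = θmin then (1:ℝ) else 0 with hd
  have hEeq : E = U * Matrix.diagonal d * star U := by
    rw [hE]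
    conv_lhs => rw [hspec]
    rw [myconj_aeval U _ hU hU2, myaeval_diag]
    have hfe : (fun i => Polynomial.eval (lam i) p) = d := funext heval
    rw [hfe]
  have hPSD : E.PosSemidef := by
    rw [hEeq]
    have hdiag : (Matrix.diagonal d).PosSemidef := by
      apply Matrix.PosSemidef.diagonal
      intro i
      rw [hd]
      dsimp only
      split <;> norm_num
    have h2 := hdiag.mul_mul_conjTranspose_same U
    rwa [← Matrix.star_eq_conjTranspose] at h2
  have hAE : A * E = θmin • E := by
    rw [hEeq]
    conv_lhs => rw [hspec]
    have hmid : U * Matrix.diagonal lam * star U * (U * Matrix.diagonal d * star U)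
        = U * (Matrix.diagonal lam * Matrix.diagonal d) * star U := by
      calc U * Matrix.diagonal lam * star U * (U * Matrix.diagonal d * star U)
          = U * Matrix.diagonal lam * (star U * U) * (Matrix.diagonal d * star U) := by
            simp only [mul_assoc]
        _ = _ := by rw [hU2]; simp only [mul_one, mul_assoc]
    rw [hmid, Matrix.diagonal_mul_diagonal]
    have hdd : (fun i => lam i * d i) = θmin • d := by
      funext i
      simp only [hd, Pi.smul_apply, smul_eq_mul]
      by_cases h : lam i = θmin
      · rw [if_pos h, h]
      · rw [if_neg h, mul_zero, mul_zero]
    rw [hdd, Matrix.diagonal_smul, mul_smul_comm, smul_mul_assoc]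
  have htraceE : E.trace
      = ((Finset.univ.filter (fun i => lam i = θmin)).card : ℝ) := by
    rw [hEeq, Matrix.trace_mul_cycle, hU2, one_mul, Matrix.trace_diagonal]
    simp only [hd]
    rw [Finset.sum_boole]
  -- entries of E depend only on distance
  have hwalk : ∃ w : ℕ → (ℕ → ℝ), ∀ (m : ℕ) (x y : V),
      (A ^ m) x y = w m (Γ.G.dist x y) := by
    choose w hw using fun m => Γ.walk_entry m
    exact ⟨w, hw⟩
  obtain ⟨wf, hwf⟩ := hwalk
  set f : ℕ → ℝ :=
    fun t => ∑ m ∈ Finset.range (p.natDegree + 1), p.coeff m * wf m t with hfdef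
  have hEent : ∀ x y, E x y = f (Γ.G.dist x y) := by
    intro x y
    rw [hE, Polynomial.aeval_eq_sum_range, Matrix.sum_apply, hfdef]
    apply Finset.sum_congr rfl
    intro m _
    rw [Matrix.smul_apply, hwf m x y, smul_eq_mul]
  -- f 0 > 0
  have hcard1 : 1 ≤ (Finset.univ.filter (fun i => lam i = θmin)).card :=
    Finset.card_pos.mpr ⟨i0, Finset.mem_filter.mpr ⟨Finset.mem_univ _, hi0⟩⟩
  have htrace2 : E.trace = (Fintype.card V : ℝ) * f 0 := by
    rw [Matrix.trace]
    rw [Finset.sum_congr rfl (fun x _ => ?_), Finset.sum_const, Finset.card_univ, nsmul_eq_mul]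
    show E x x = f 0
    rw [hEent, SimpleGraph.dist_self]
  have hnpos : 0 < (Fintype.card V : ℝ) := by
    have := Fintype.card_pos (α := V)
    exact_mod_cast this
  have hf0pos : 0 < f 0 := by
    have h1 : (1:ℝ) ≤ (Fintype.card V : ℝ) * f 0 := by
      rw [← htrace2, htraceE]
      exact_mod_cast hcard1
    nlinarith
  -- k * f 1 = θmin * f 0
  obtain ⟨x0⟩ := hVne
  have hkE : (Γ.k : ℝ) * f 1 = θmin * f 0 := by
    have h1 := congrArg (fun M : Matrix V V ℝ => M x0 x0) hAE
    rw [Matrix.smul_apply, smul_eq_mul, Matrix.mul_apply] at h1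
    have hterm : ∀ z, A x0 z * E z x0 = if Γ.G.Adj x0 z then f 1 else 0 := by
      intro z
      rw [hEent]
      show (SimpleGraph.adjMatrix ℝ Γ.G) x0 z * _ = _
      rw [SimpleGraph.adjMatrix_apply]
      by_cases h : Γ.G.Adj x0 z
      · rw [if_pos h, if_pos h, one_mul, SimpleGraph.dist_eq_one_iff_adj.mpr h.symm]
      · rw [if_neg h, if_neg h, zero_mul]
    rw [Finset.sum_congr rfl (fun z _ => hterm z), Finset.sum_ite, Finset.sum_const_zero,
      add_zero, Finset.sum_const] at h1
    have hdeg : (Finset.univ.filter (fun z => Γ.G.Adj x0 z)).card = Γ.k := by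
      rw [← Γ.degree_eq x0]
      congr 1
      ext z
      simp
    rw [hdeg, nsmul_eq_mul] at h1
    rw [h1, hEent, SimpleGraph.dist_self]
  have hkpos : 0 < (Γ.k : ℝ) := by
    rcases lt_or_eq_of_le (Nat.cast_nonneg (α := ℝ) Γ.k) with h | h
    · exact h
    · exfalso
      rw [← h, zero_mul] at hkE
      nlinarith
  -- quadratic form
  set χ : V → ℝ := fun z => if z ∈ C then 1 else 0 with hχ
  have hquad : 0 ≤ dotProduct (star χ) (Matrix.mulVec E χ) := hPSD.dotProduct_mulVec_nonneg χ
  have hform : dotProduct (star χ) (Matrix.mulVec E χ)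
      = (C.card : ℝ) * (f 0 + ((C.card : ℝ) - 1) * f 1) := by
    have hmv : ∀ x, (Matrix.mulVec E χ) x = ∑ y ∈ C, E x y := by
      intro x
      show dotProduct (E x) χ = _
      rw [dotProduct]
      rw [Finset.sum_congr rfl (fun y _ => ?_), Finset.sum_ite_mem, Finset.univ_inter]
      show E x y * χ y = if y ∈ C then E x y else 0
      rw [hχ]
      dsimp only
      by_cases h : y ∈ C
      · rw [if_pos h, if_pos h, mul_one]
      · rw [if_neg h, if_neg h, mul_zero]
    have hinner : ∀ x ∈ C, ∑ y ∈ C, E x y = f 0 + ((C.card : ℝ) - 1) * f 1 := by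
      intro x hx
      rw [← Finset.add_sum_erase _ _ hx]
      congr 1
      · rw [hEent, SimpleGraph.dist_self]
      · rw [Finset.sum_congr rfl (fun y hy => ?_), Finset.sum_const, nsmul_eq_mul,
          Finset.card_erase_of_mem hx, Nat.cast_sub (Finset.card_pos.mpr ⟨x, hx⟩),
          Nat.cast_one]
        have hyC : y ∈ C := Finset.mem_of_mem_erase hy
        have hne : x ≠ y := (Finset.ne_of_mem_erase hy).symm
        have hadj : Γ.G.Adj x y := hC (Finset.mem_coe.mpr hx) (Finset.mem_coe.mpr hyC) hne
        rw [hEent, SimpleGraph.dist_eq_one_iff_adj.mpr hadj]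
    rw [dotProduct]
    have hterm : ∀ x, star χ x * (Matrix.mulVec E χ) x
        = if x ∈ C then (f 0 + ((C.card : ℝ) - 1) * f 1) else 0 := by
      intro x
      rw [Pi.star_apply, star_trivial, hmv x, hχ]
      dsimp only
      by_cases h : x ∈ C
      · rw [if_pos h, if_pos h, one_mul, hinner x h]
      · rw [if_neg h, if_neg h, zero_mul]
    rw [Finset.sum_congr rfl (fun x _ => hterm x), Finset.sum_ite_mem, Finset.univ_inter,
      Finset.sum_const, nsmul_eq_mul]
  -- final arithmetic
  have habs : |θmin| = -θmin := abs_of_neg hneg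
  rcases Nat.eq_zero_or_pos C.card with hc0 | hcpos
  · rw [hc0]
    have h0 : 0 ≤ (Γ.k : ℝ) / |θmin| := by positivity
    push_cast
    linarith
  · have hcc1 : (1:ℝ) ≤ (C.card : ℝ) := by exact_mod_cast hcpos
    have hccpos : (0:ℝ) < (C.card : ℝ) := lt_of_lt_of_le one_pos hcc1
    rw [hform] at hquad
    have key : 0 ≤ f 0 + ((C.card : ℝ) - 1) * f 1 := by
      by_contra hk
      push_neg at hk
      nlinarith
    have h3 : 0 ≤ (Γ.k : ℝ) * (f 0 + ((C.card : ℝ) - 1) * f 1) :=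
      mul_nonneg hkpos.le key
    have h4 : (Γ.k : ℝ) * (f 0 + ((C.card : ℝ) - 1) * f 1)
        = f 0 * ((Γ.k : ℝ) + ((C.card : ℝ) - 1) * θmin) := by
      linear_combination ((C.card : ℝ) - 1) * hkE
    rw [h4] at h3
    have h5 : 0 ≤ (Γ.k : ℝ) + ((C.card : ℝ) - 1) * θmin := by
      nlinarith
    have h6 : ((C.card : ℝ) - 1) * (-θmin) ≤ (Γ.k : ℝ) := by linarith
    have h7 : (C.card : ℝ) - 1 ≤ (Γ.k : ℝ) / (-θmin) := by
      rw [le_div_iff₀ (neg_pos.mpr hneg)]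
      exact h6
    rw [habs]
    linarith
end

section
/- Let Γ be a non-geometric distance-regular graph with diameter D ≥ 3 and c_2 = 1. Then a_1 ≤ t - 2, where t = k/(a_1+1). -/
open scoped Classical

open Finset SimpleGraph Matrix

namespace DRGP

variable {V : Type} [Fintype V] [DecidableEq V] (Γ : DRG V)

lemma countb (i : ℕ) (x y : V) (h : Γ.G.dist x y = i) :
    (univ.filter (fun z => Γ.G.Adj y z ∧ Γ.G.dist x z = i+1)).card = Γ.b i := by
  rw [← Γ.count_b i x y h, Nat.card_eq_fintype_card, Fintype.card_subtype]

lemma countc (i : ℕ) (x y : V) (hi : 1 ≤ i) (h : Γ.G.dist x y = i) :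
    (univ.filter (fun z => Γ.G.Adj y z ∧ Γ.G.dist x z = i-1)).card = Γ.c i := by
  rw [← Γ.count_c i x y hi h, Nat.card_eq_fintype_card, Fintype.card_subtype]

lemma exists_edge (hD : 3 ≤ Γ.diam) : ∃ x y : V, Γ.G.Adj x y := by
  obtain ⟨x, y, hxy⟩ := Γ.dist_attained
  have hne : x ≠ y := by
    rintro rfl
    rw [SimpleGraph.dist_self] at hxy
    omega
  obtain ⟨w⟩ := (Γ.conn x y)
  cases w with
  | nil => exact absurd rfl hne
  | cons h _ => exact ⟨_, _, h⟩

lemma regular (x : V) : (univ.filter (Γ.G.Adj x)).card = Γ.k := by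
  rw [DRG.k]
  have := countb Γ 0 x x (SimpleGraph.dist_self)
  rw [← this]
  congr 1
  ext z
  simp [SimpleGraph.dist_eq_one_iff_adj]

lemma k_pos (hD : 3 ≤ Γ.diam) : 1 ≤ Γ.k := by
  obtain ⟨x, y, hxy⟩ := exists_edge Γ hD
  rw [← regular Γ x]
  exact card_pos.2 ⟨y, by simp [hxy]⟩

lemma lambda_card {x y : V} (h : Γ.G.Adj x y) :
    ((univ.filter (fun z => Γ.G.Adj x z ∧ Γ.G.Adj y z)).card : ℤ) = Γ.a1 := by
  have d1 : Γ.G.dist x y = 1 := SimpleGraph.dist_eq_one_iff_adj.2 h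
  have h2 : ∀ z, Γ.G.Adj y z →
      Γ.G.dist x z = 0 ∨ Γ.G.dist x z = 1 ∨ Γ.G.dist x z = 2 := by
    intro z hz
    have ht := Γ.conn.dist_triangle (u := x) (v := y) (w := z)
    rw [d1, SimpleGraph.dist_eq_one_iff_adj.2 hz] at ht
    omega
  have hd : ∀ (i j : ℕ), i ≠ j →
      Disjoint (univ.filter (fun z => Γ.G.Adj y z ∧ Γ.G.dist x z = i))
        (univ.filter (fun z => Γ.G.Adj y z ∧ Γ.G.dist x z = j)) := by
    intro i j hij
    rw [Finset.disjoint_left]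
    rintro z hz1 hz2
    simp only [mem_filter] at hz1 hz2
    omega
  have key : (univ.filter (fun z => Γ.G.Adj y z)).card =
      ((univ.filter (fun z => Γ.G.Adj y z ∧ Γ.G.dist x z = 0) ∪
        univ.filter (fun z => Γ.G.Adj y z ∧ Γ.G.dist x z = 1)) ∪
        univ.filter (fun z => Γ.G.Adj y z ∧ Γ.G.dist x z = 2)).card := by
    congr 1
    ext z
    simp only [mem_union, mem_filter, mem_univ, true_and]
    constructor
    · intro hz
      rcases h2 z hz with h | h | h <;> tauto
    · rintro ((⟨h, _⟩ | ⟨h, _⟩) | ⟨h, _⟩) <;> exact h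
  rw [card_union_of_disjoint (disjoint_union_left.2 ⟨hd 0 2 (by omega), hd 1 2 (by omega)⟩),
    card_union_of_disjoint (hd 0 1 (by omega))] at key
  have hc0 : (univ.filter (fun z => Γ.G.Adj y z ∧ Γ.G.dist x z = 0)).card = 1 := by
    have := countc Γ 1 x y le_rfl d1
    rw [Γ.c_one] at this
    simpa using this
  have hb1 : (univ.filter (fun z => Γ.G.Adj y z ∧ Γ.G.dist x z = 2)).card = Γ.b 1 := by
    have := countb Γ 1 x y d1
    simpa using this
  have hT : univ.filter (fun z => Γ.G.Adj y z ∧ Γ.G.dist x z = 1) =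
      univ.filter (fun z => Γ.G.Adj x z ∧ Γ.G.Adj y z) := by
    ext z
    simp only [mem_filter, mem_univ, true_and, SimpleGraph.dist_eq_one_iff_adj]
    tauto
  rw [hc0, hb1, hT, regular Γ y] at key
  rw [DRG.a1]
  omega

lemma a1_nonneg (hD : 3 ≤ Γ.diam) : 0 ≤ Γ.a1 := by
  obtain ⟨x, y, h⟩ := exists_edge Γ hD
  rw [← lambda_card Γ h]
  positivity

lemma c2_unique (hc2 : Γ.c 2 = 1) {u v w : V} (hne : u ≠ v) (hnadj : ¬ Γ.G.Adj u v)
    (h1 : Γ.G.Adj u w) (h2 : Γ.G.Adj w v) :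
    (univ.filter (fun z => Γ.G.Adj u z ∧ Γ.G.Adj v z)).card = 1 := by
  have hdist : Γ.G.dist u v = 2 := by
    have hle := Γ.conn.dist_triangle (u := u) (v := w) (w := v)
    rw [SimpleGraph.dist_eq_one_iff_adj.2 h1, SimpleGraph.dist_eq_one_iff_adj.2 h2] at hle
    have h0 : Γ.G.dist u v ≠ 0 := by
      exact fun h0 => hne (Γ.conn.dist_eq_zero_iff.mp h0)
    have hone : Γ.G.dist u v ≠ 1 := by
      rw [Ne, SimpleGraph.dist_eq_one_iff_adj]; exact hnadj
    omega
  have := countc Γ 2 u v (by omega) hdist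
  rw [hc2] at this
  rw [← this]
  congr 1
  ext z
  simp only [mem_filter, mem_univ, true_and]
  rw [show (2:ℕ) - 1 = 1 from rfl, SimpleGraph.dist_eq_one_iff_adj]
  tauto

noncomputable def Cl (x y : V) : Finset V :=
  insert x (insert y (univ.filter (fun z => Γ.G.Adj x z ∧ Γ.G.Adj y z)))

lemma mem_Cl {x y z : V} :
    z ∈ Cl Γ x y ↔ z = x ∨ z = y ∨ (Γ.G.Adj x z ∧ Γ.G.Adj y z) := by
  simp [Cl]

lemma self_mem_Cl {x y : V} : x ∈ Cl Γ x y := (mem_Cl Γ).2 (Or.inl rfl)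
lemma self_mem_Cl' {x y : V} : y ∈ Cl Γ x y := (mem_Cl Γ).2 (Or.inr (Or.inl rfl))

lemma Cl_card {x y : V} (h : Γ.G.Adj x y) : ((Cl Γ x y).card : ℤ) = Γ.a1 + 2 := by
  rw [Cl, card_insert_of_notMem, card_insert_of_notMem]
  · push_cast
    rw [lambda_card Γ h]
    ring
  · simp only [mem_filter]
    exact fun hy => (Γ.G.irrefl hy.2.2)
  · simp [h.ne, Γ.G.irrefl]

lemma Cl_clique (hc2 : Γ.c 2 = 1) {x y : V} (h : Γ.G.Adj x y) :
    Γ.G.IsClique (Cl Γ x y : Set V) := by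
  intro u hu v hv hne
  rw [Finset.mem_coe, mem_Cl] at hu hv
  rcases hu with rfl | rfl | ⟨hu1, hu2⟩ <;> rcases hv with rfl | rfl | hv
  · exact absurd rfl hne
  · exact h
  · exact hv.1
  · exact h.symm
  · exact absurd rfl hne
  · exact hv.2
  · exact hu1.symm
  · exact hu2.symm
  · -- both in the common-neighbour set
    by_contra hnadj
    have hcard := c2_unique Γ hc2 hne hnadj hu1.symm hv.1
    have hsub : ({x, y} : Finset V) ⊆
        univ.filter (fun z => Γ.G.Adj u z ∧ Γ.G.Adj v z) := by
      intro z hz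
      rcases Finset.mem_insert.1 hz with rfl | hz
      · simp only [mem_filter, mem_univ, true_and]
        exact ⟨hu1.symm, hv.1.symm⟩
      · rw [Finset.mem_singleton] at hz
        subst hz
        simp only [mem_filter, mem_univ, true_and]
        exact ⟨hu2.symm, hv.2.symm⟩
    have h2le := Finset.card_le_card hsub
    rw [Finset.card_pair h.ne, hcard] at h2le
    omega

lemma Cl_subset {x y : V} (C : Finset V) (hC : Γ.G.IsClique (C : Set V))
    (hx : x ∈ C) (hy : y ∈ C) : C ⊆ Cl Γ x y := by
  intro z hz
  rw [mem_Cl]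
  by_cases h1 : z = x
  · exact Or.inl h1
  by_cases h2 : z = y
  · exact Or.inr (Or.inl h2)
  exact Or.inr (Or.inr ⟨hC (Finset.mem_coe.2 hx) (Finset.mem_coe.2 hz) (Ne.symm h1),
    hC (Finset.mem_coe.2 hy) (Finset.mem_coe.2 hz) (Ne.symm h2)⟩)

lemma Cl_eq (hc2 : Γ.c 2 = 1) {x y x' y' : V} (h' : Γ.G.Adj x' y')
    (hx : x ∈ Cl Γ x' y') (hy : y ∈ Cl Γ x' y') (h : Γ.G.Adj x y) :
    Cl Γ x' y' = Cl Γ x y := by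
  have hsub : Cl Γ x' y' ⊆ Cl Γ x y := Cl_subset Γ (Cl Γ x' y') (Cl_clique Γ hc2 h') hx hy
  refine Finset.eq_of_subset_of_card_le hsub ?_
  have c1 := Cl_card Γ h
  have c2 := Cl_card Γ h'
  omega

noncomputable def CS : Finset (Finset V) :=
  (univ.filter (fun p : V × V => Γ.G.Adj p.1 p.2)).image (fun p => Cl Γ p.1 p.2)

lemma mem_CS {C : Finset V} : C ∈ CS Γ ↔ ∃ x y, Γ.G.Adj x y ∧ C = Cl Γ x y := by
  simp only [CS, Finset.mem_image, mem_filter, mem_univ, true_and, Prod.exists]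
  constructor
  · rintro ⟨a, b, hab, rfl⟩; exact ⟨a, b, hab, rfl⟩
  · rintro ⟨a, b, hab, rfl⟩; exact ⟨a, b, hab, rfl⟩

lemma Cl_mem_CS {x y : V} (h : Γ.G.Adj x y) : Cl Γ x y ∈ CS Γ :=
  (mem_CS Γ).2 ⟨x, y, h, rfl⟩

lemma CS_clique (hc2 : Γ.c 2 = 1) {C : Finset V} (hC : C ∈ CS Γ) :
    Γ.G.IsClique (C : Set V) := by
  obtain ⟨a, b, hab, rfl⟩ := (mem_CS Γ).1 hC
  exact Cl_clique Γ hc2 hab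

lemma CS_card {C : Finset V} (hC : C ∈ CS Γ) : (C.card : ℤ) = Γ.a1 + 2 := by
  obtain ⟨a, b, hab, rfl⟩ := (mem_CS Γ).1 hC
  exact Cl_card Γ hab

lemma CS_unique (hc2 : Γ.c 2 = 1) {x y : V} (h : Γ.G.Adj x y) {C : Finset V}
    (hC : C ∈ CS Γ) (hx : x ∈ C) (hy : y ∈ C) : C = Cl Γ x y := by
  obtain ⟨a, b, hab, rfl⟩ := (mem_CS Γ).1 hC
  exact Cl_eq Γ hc2 hab hx hy h

lemma fiber_eq (hc2 : Γ.c 2 = 1) {x : V} {C : Finset V} (hC : C ∈ CS Γ) (hx : x ∈ C) :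
    (univ.filter (Γ.G.Adj x)).filter (fun y => Cl Γ x y = C) = C.erase x := by
  ext z
  simp only [mem_filter, mem_univ, true_and, Finset.mem_erase]
  constructor
  · rintro ⟨hadj, rfl⟩
    exact ⟨hadj.ne', self_mem_Cl' Γ⟩
  · rintro ⟨hne, hz⟩
    have hadj : Γ.G.Adj x z :=
      CS_clique Γ hc2 hC (Finset.mem_coe.2 hx) (Finset.mem_coe.2 hz) (Ne.symm hne)
    exact ⟨hadj, (CS_unique Γ hc2 hadj hC hx hz).symm⟩

lemma deg_CS (hc2 : Γ.c 2 = 1) (hD : 3 ≤ Γ.diam) {t : ℕ}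
    (ht : (Γ.k : ℤ) = t * (Γ.a1 + 1)) (x : V) :
    ((CS Γ).filter (fun C => x ∈ C)).card = t := by
  obtain ⟨n, hn⟩ : ∃ n : ℕ, Γ.a1 = n :=
    ⟨Γ.a1.toNat, (Int.toNat_of_nonneg (a1_nonneg Γ hD)).symm⟩
  have hmaps : ∀ y ∈ univ.filter (Γ.G.Adj x),
      Cl Γ x y ∈ (CS Γ).filter (fun C => x ∈ C) := by
    intro y hy
    rw [mem_filter] at hy
    replace hy := hy.2
    rw [mem_filter]
    exact ⟨Cl_mem_CS Γ hy, self_mem_Cl Γ⟩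
  have key : Γ.k = ∑ C ∈ (CS Γ).filter (fun C => x ∈ C),
      ((univ.filter (Γ.G.Adj x)).filter (fun y => Cl Γ x y = C)).card := by
    rw [← regular Γ x]
    exact Finset.card_eq_sum_card_fiberwise hmaps
  have hfib : ∀ C ∈ (CS Γ).filter (fun C => x ∈ C),
      ((univ.filter (Γ.G.Adj x)).filter (fun y => Cl Γ x y = C)).card = n + 1 := by
    intro C hC
    rw [mem_filter] at hC
    rw [fiber_eq Γ hc2 hC.1 hC.2, Finset.card_erase_of_mem hC.2]
    have := CS_card Γ hC.1
    omega
  rw [Finset.sum_congr rfl hfib, Finset.sum_const, smul_eq_mul] at key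
  have hZ : ((((CS Γ).filter (fun C => x ∈ C)).card : ℤ)) * (n + 1) = t * (n + 1) := by
    rw [← hn, ← ht]
    push_cast [key, hn]
    ring
  have : ((n : ℤ) + 1) ≠ 0 := by positivity
  exact_mod_cast mul_right_cancel₀ this hZ

lemma pair_count (hc2 : Γ.c 2 = 1) (hD : 3 ≤ Γ.diam) {t : ℕ}
    (ht : (Γ.k : ℤ) = t * (Γ.a1 + 1)) (x y : V) :
    ((CS Γ).filter (fun C => x ∈ C ∧ y ∈ C)).card =
      if x = y then t else if Γ.G.Adj x y then 1 else 0 := by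
  by_cases hxy : x = y
  · subst hxy
    rw [if_pos rfl, ← deg_CS Γ hc2 hD ht x]
    congr 1
    apply filter_congr
    intro C _
    simp
  · rw [if_neg hxy]
    by_cases hadj : Γ.G.Adj x y
    · rw [if_pos hadj]
      have : (CS Γ).filter (fun C => x ∈ C ∧ y ∈ C) = {Cl Γ x y} := by
        ext C
        rw [mem_filter, Finset.mem_singleton]
        constructor
        · rintro ⟨hC, hx, hy⟩
          exact CS_unique Γ hc2 hadj hC hx hy
        · rintro rfl
          exact ⟨Cl_mem_CS Γ hadj, self_mem_Cl Γ, self_mem_Cl' Γ⟩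
      rw [this, Finset.card_singleton]
    · rw [if_neg hadj]
      rw [Finset.card_eq_zero, Finset.filter_eq_empty_iff]
      rintro C hC ⟨hx, hy⟩
      exact hadj (CS_clique Γ hc2 hC (Finset.mem_coe.2 hx) (Finset.mem_coe.2 hy) hxy)

noncomputable def NM : Matrix V {C : Finset V // C ∈ CS Γ} ℝ :=
  fun x C => if x ∈ C.1 then 1 else 0

lemma NM_mul (hc2 : Γ.c 2 = 1) (hD : 3 ≤ Γ.diam) {t : ℕ}
    (ht : (Γ.k : ℤ) = t * (Γ.a1 + 1)) :
    NM Γ * (NM Γ)ᵀ = Γ.adjMat + (t : ℝ) • 1 := by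
  ext x y
  rw [Matrix.mul_apply]
  have h1 : ∑ C : {C : Finset V // C ∈ CS Γ}, NM Γ x C * (NM Γ)ᵀ C y
      = ∑ C ∈ CS Γ, (if x ∈ C ∧ y ∈ C then (1 : ℝ) else 0) := by
    rw [← Finset.sum_coe_sort (CS Γ) (fun C => if x ∈ C ∧ y ∈ C then (1 : ℝ) else 0)]
    apply Finset.sum_congr rfl
    intro C _
    simp only [NM, Matrix.transpose_apply, ite_and, mul_ite, mul_one, mul_zero, ite_mul, one_mul, zero_mul]
    split_ifs <;> simp_all
  rw [h1, Finset.sum_boole]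
  have h2 := pair_count Γ hc2 hD ht x y
  rw [h2]
  simp only [Matrix.add_apply, Matrix.smul_apply, Matrix.one_apply, DRG.adjMat,
    SimpleGraph.adjMatrix_apply, smul_eq_mul]
  by_cases hxy : x = y
  · subst hxy
    simp [Γ.G.irrefl]
  · by_cases hadj : Γ.G.Adj x y <;> simp [hxy, hadj]

lemma quad_nonneg (v : V → ℝ) : 0 ≤ v ⬝ᵥ (NM Γ * (NM Γ)ᵀ).mulVec v := by
  rw [← Matrix.mulVec_mulVec, Matrix.dotProduct_mulVec, ← Matrix.mulVec_transpose]
  exact Finset.sum_nonneg fun i _ => mul_self_nonneg _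

lemma t_pos (hD : 3 ≤ Γ.diam) {t : ℕ} (ht : (Γ.k : ℤ) = t * (Γ.a1 + 1)) : 1 ≤ t := by
  rcases Nat.eq_zero_or_pos t with h | h
  · subst h
    have := k_pos Γ hD
    simp at ht
    omega
  · exact h

lemma eig_ge (hc2 : Γ.c 2 = 1) (hD : 3 ≤ Γ.diam) {t : ℕ}
    (ht : (Γ.k : ℤ) = t * (Γ.a1 + 1)) :
    ∀ θ : ℝ, Γ.IsEig θ → -(t : ℝ) ≤ θ := by
  rintro θ ⟨v, hv, hAv⟩
  have hS : 0 < v ⬝ᵥ v := by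
    rcases lt_or_eq_of_le (Finset.sum_nonneg fun i _ => mul_self_nonneg (v i)) with h | h
    · exact h
    · exact absurd (dotProduct_self_eq_zero.mp h.symm) hv
  have hq := quad_nonneg Γ v
  rw [NM_mul Γ hc2 hD ht, Matrix.add_mulVec, Matrix.smul_mulVec, Matrix.one_mulVec,
    hAv, dotProduct_add, dotProduct_smul, dotProduct_smul] at hq
  simp only [smul_eq_mul] at hq
  nlinarith

lemma geo (hc2 : Γ.c 2 = 1) (hD : 3 ≤ Γ.diam) {t : ℕ}
    (ht : (Γ.k : ℤ) = t * (Γ.a1 + 1)) (heig : Γ.IsEig (-(t : ℝ))) : Γ.IsGeometric := by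
  have htp : (1 : ℕ) ≤ t := t_pos Γ hD ht
  have htR : (0 : ℝ) < t := by exact_mod_cast htp
  refine ⟨-(t : ℝ), heig, eig_ge Γ hc2 hD ht, ↑(CS Γ), ?_, ?_⟩
  · intro C hC
    rw [Finset.mem_coe] at hC
    refine ⟨CS_clique Γ hc2 hC, ?_⟩
    have hcard := CS_card Γ hC
    have habs : |(-(t : ℝ))| = t := by
      rw [abs_neg, abs_of_pos htR]
    rw [habs]
    have hkR : (Γ.k : ℝ) = t * ((Γ.a1 : ℝ) + 1) := by exact_mod_cast ht
    have : (Γ.k : ℝ) / t = (Γ.a1 : ℝ) + 1 := by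
      rw [hkR]
      field_simp
    rw [this]
    have : (C.card : ℝ) = (Γ.a1 : ℝ) + 2 := by exact_mod_cast hcard
    rw [this]
    ring
  · intro x y hxy
    refine ⟨Cl Γ x y, ⟨Finset.mem_coe.2 (Cl_mem_CS Γ hxy), self_mem_Cl Γ, self_mem_Cl' Γ⟩, ?_⟩
    rintro C ⟨hC, hx, hy⟩
    exact CS_unique Γ hc2 hxy (Finset.mem_coe.1 hC) hx hy

lemma card_le (hc2 : Γ.c 2 = 1) (hD : 3 ≤ Γ.diam) {t : ℕ}
    (ht : (Γ.k : ℤ) = t * (Γ.a1 + 1)) (hng : ¬ Γ.IsGeometric) :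
    Fintype.card V ≤ (CS Γ).card := by
  have hker : ∀ v : V → ℝ, (NM Γ * (NM Γ)ᵀ).mulVec v = 0 → v = 0 := by
    intro v hv
    by_contra hv0
    apply hng
    apply geo Γ hc2 hD ht
    refine ⟨v, hv0, ?_⟩
    rw [NM_mul Γ hc2 hD ht, Matrix.add_mulVec, Matrix.smul_mulVec,
      Matrix.one_mulVec] at hv
    have := eq_neg_of_add_eq_zero_left hv
    rw [this]
    ext i
    simp
  have hinj : Function.Injective (NM Γ * (NM Γ)ᵀ).mulVecLin := by
    rw [← LinearMap.ker_eq_bot]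
    rw [LinearMap.ker_eq_bot']
    intro v hv
    exact hker v hv
  have hrank : (NM Γ * (NM Γ)ᵀ).rank = Fintype.card V := by
    rw [Matrix.rank, LinearMap.finrank_range_of_inj hinj, Module.finrank_pi]
  calc Fintype.card V = (NM Γ * (NM Γ)ᵀ).rank := hrank.symm
    _ ≤ (NM Γ).rank := Matrix.rank_mul_le_left _ _
    _ ≤ Fintype.card {C : Finset V // C ∈ CS Γ} := Matrix.rank_le_card_width _
    _ = (CS Γ).card := Fintype.card_coe _

lemma double_count (hc2 : Γ.c 2 = 1) (hD : 3 ≤ Γ.diam) {t : ℕ}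
    (ht : (Γ.k : ℤ) = t * (Γ.a1 + 1)) {n : ℕ} (hn : Γ.a1 = (n : ℤ)) :
    (n + 2) * (CS Γ).card = (Fintype.card V) * t := by
  have swap : ∑ C ∈ CS Γ, C.card = ∑ x : V, ((CS Γ).filter (fun C => x ∈ C)).card := by
    have l1 : ∀ C : Finset V, C.card = ∑ x : V, (if x ∈ C then 1 else 0) := by
      intro C
      rw [Finset.sum_ite_mem, Finset.univ_inter, Finset.sum_const, smul_eq_mul, mul_one]
    have l2 : ∀ x : V, ((CS Γ).filter (fun C => x ∈ C)).card
        = ∑ C ∈ CS Γ, (if x ∈ C then 1 else 0) := by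
      intro x
      rw [Finset.sum_ite, Finset.sum_const, Finset.sum_const]
      simp
    simp_rw [l1, l2]
    exact Finset.sum_comm
  have lhs : ∑ C ∈ CS Γ, C.card = (n + 2) * (CS Γ).card := by
    rw [Finset.sum_congr rfl (fun C hC => ?_), Finset.sum_const, smul_eq_mul, Nat.mul_comm]
    have := CS_card Γ hC
    omega
  have rhs : ∑ x : V, ((CS Γ).filter (fun C => x ∈ C)).card = (Fintype.card V) * t := by
    rw [Finset.sum_congr rfl (fun x _ => deg_CS Γ hc2 hD ht x), Finset.sum_const, smul_eq_mul,
      Finset.card_univ]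
  rw [lhs, rhs] at swap
  exact swap

end DRGP

theorem nongeometric_c2_eq_one_a1_bound {V : Type} [Fintype V] [DecidableEq V]
    (Γ : DRG V) (hD : 3 ≤ Γ.diam) (hc2 : Γ.c 2 = 1)
    (hng : ¬ Γ.IsGeometric) (t : ℕ) (ht : (Γ.k : ℤ) = (t : ℤ) * (Γ.a1 + 1)) :
    Γ.a1 ≤ (t : ℤ) - 2 := by
  obtain ⟨n, hn⟩ : ∃ n : ℕ, Γ.a1 = (n : ℤ) :=
    ⟨Γ.a1.toNat, (Int.toNat_of_nonneg (DRGP.a1_nonneg Γ hD)).symm⟩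
  have hVle := DRGP.card_le Γ hc2 hD ht hng
  have hdc := DRGP.double_count Γ hc2 hD ht hn
  have hV : 1 ≤ Fintype.card V := by
    have : Nonempty V := Γ.conn.nonempty
    exact Fintype.card_pos
  have hcs : 1 ≤ (DRGP.CS Γ).card := le_trans hV hVle
  -- (n+2) * cs = cv * t ≤ cs * t  ⟹ n + 2 ≤ t
  have h1 : (n + 2) * (DRGP.CS Γ).card ≤ t * (DRGP.CS Γ).card := by
    calc (n + 2) * (DRGP.CS Γ).card = (Fintype.card V) * t := hdc
      _ ≤ (DRGP.CS Γ).card * t := Nat.mul_le_mul_right t hVle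
      _ = t * (DRGP.CS Γ).card := Nat.mul_comm _ _
  have h2 : n + 2 ≤ t := Nat.le_of_mul_le_mul_right h1 hcs
  omega
end

section
/- Let A be the adjacency matrix of a graph, M a 0/1 vertex-clique incidence matrix such that A = MM^⊤ - tI for some positive integer t. If -t is not an eigenvalue of A, then M has rank equal to the number of vertices, and hence the number of cliques is at least the number of vertices. -/
open Matrix

theorem clique_incidence_full_rank (n N : ℕ) (G : SimpleGraph (Fin n))
    [DecidableRel G.Adj] (t : ℕ) (ht : 0 < t) (M : Matrix (Fin n) (Fin N) ℝ)
    (hM01 : ∀ i j, M i j = 0 ∨ M i j = 1)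
    (hA : G.adjMatrix ℝ = M * Mᵀ - (t : ℝ) • 1)
    (heig : ¬ ∃ v : Fin n → ℝ, v ≠ 0 ∧
      (G.adjMatrix ℝ).mulVec v = (-(t : ℝ)) • v) :
    M.rank = n ∧ n ≤ N := by
  push_neg at heig
  have hinj : Function.Injective (M * Mᵀ).mulVecLin := by
    rw [← LinearMap.ker_eq_bot, LinearMap.ker_eq_bot']
    intro v hv
    by_contra hvne
    apply heig v hvne
    rw [hA]
    simp only [sub_mulVec, smul_mulVec, one_mulVec]
    rw [show (M * Mᵀ).mulVec v = (M * Mᵀ).mulVecLin v from rfl, hv]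
    simp [neg_smul]
  have hrank : (M * Mᵀ).rank = n := by
    rw [Matrix.rank, LinearMap.finrank_range_of_inj hinj]
    simp
  have h1 : M.rank = n := by
    rw [← Matrix.rank_self_mul_transpose, hrank]
  refine ⟨h1, ?_⟩
  have := M.rank_le_card_width
  simpa [h1] using this
end

section
/- Let Γ be a distance-regular graph with valency k and diameter D ≥ 2 containing an induced star K_{1,t} with t ≥ 2. Then c_2 ≥ (t(a_1+1) - k)/binom(t,2) + 1. -/
open scoped Classical

theorem claw_bound {V : Type} [Fintype V] [DecidableEq V]
    (Γ : DRG V) (hD : 2 ≤ Γ.diam) (t : ℕ) (ht : 2 ≤ t)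
    (x : V) (s : Finset V) (hcard : s.card = t)
    (hadj : ∀ y ∈ s, Γ.G.Adj x y)
    (hind : ∀ y ∈ s, ∀ z ∈ s, y ≠ z → ¬ Γ.G.Adj y z) :
    ((t : ℝ) * ((Γ.a1 : ℝ) + 1) - (Γ.k : ℝ)) / (t.choose 2 : ℝ) + 1 ≤ (Γ.c 2 : ℝ) := by
  classical
  have hconn := Γ.conn
  have hA1 : ∀ u v : V, Γ.G.Adj u v → Γ.G.dist u v = 1 := fun u v h =>
    SimpleGraph.dist_eq_one_iff_adj.mpr h
  have hcount : ∀ (p q : V → Prop) [inst : DecidablePred q], (∀ z, p z ↔ q z) →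
      Nat.card {z : V // p z} = (Finset.univ.filter q).card := by
    intro p q inst hpq
    rw [Nat.card_congr (Equiv.subtypeEquivRight hpq), Nat.card_eq_fintype_card,
      Fintype.card_subtype]
  -- every vertex has degree k
  have hdeg : ∀ y : V, (Finset.univ.filter (fun z => Γ.G.Adj y z)).card = Γ.k := by
    intro y
    have h := Γ.count_b 0 y y SimpleGraph.dist_self
    have h2 := hcount (fun z => Γ.G.Adj y z ∧ Γ.G.dist y z = 0 + 1) (fun z => Γ.G.Adj y z)
      (fun z => ⟨And.left, fun hz => ⟨hz, hA1 _ _ hz⟩⟩)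
    show _ = Γ.b 0
    rw [← h, h2]
  set N : Finset V := Finset.univ.filter (fun z => Γ.G.Adj x z) with hNdef
  have hN : N.card = Γ.k := hdeg x
  set A : V → Finset V := fun y => N.filter (fun z => z = y ∨ Γ.G.Adj y z) with hAdef
  -- cardinality of A y, plus b1 + 1 ≤ k
  have hAcard : ∀ y ∈ s, (A y).card = Γ.k - Γ.b 1 ∧ Γ.b 1 + 1 ≤ Γ.k := by
    intro y hy
    have hxy := hadj y hy
    have hdxy : Γ.G.dist x y = 1 := hA1 _ _ hxy
    have h0 : (Finset.univ.filter (fun z => Γ.G.Adj y z ∧ Γ.G.dist x z = 0)).card = 1 := by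
      have h := Γ.count_c 1 x y le_rfl hdxy
      rw [Γ.c_one] at h
      rw [← h]
      exact (hcount _ _ (fun z => Iff.rfl)).symm
    have h2 : (Finset.univ.filter (fun z => Γ.G.Adj y z ∧ Γ.G.dist x z = 2)).card = Γ.b 1 := by
      have h := Γ.count_b 1 x y hdxy
      rw [← h]
      exact (hcount _ _ (fun z => Iff.rfl)).symm
    have hsplit : (Finset.univ.filter (fun z => Γ.G.Adj y z))
        = Finset.univ.filter (fun z => Γ.G.Adj y z ∧ Γ.G.dist x z = 0)
          ∪ Finset.univ.filter (fun z => Γ.G.Adj y z ∧ Γ.G.dist x z = 1)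
          ∪ Finset.univ.filter (fun z => Γ.G.Adj y z ∧ Γ.G.dist x z = 2) := by
      ext z
      simp only [Finset.mem_filter, Finset.mem_union, Finset.mem_univ, true_and]
      constructor
      · intro hz
        have hle : Γ.G.dist x z ≤ 2 := by
          calc Γ.G.dist x z ≤ Γ.G.dist x y + Γ.G.dist y z := hconn.dist_triangle
          _ = 2 := by rw [hdxy, hA1 _ _ hz]
        have : Γ.G.dist x z = 0 ∨ Γ.G.dist x z = 1 ∨ Γ.G.dist x z = 2 := by omega
        tauto
      · rintro ((⟨h, _⟩ | ⟨h, _⟩) | ⟨h, _⟩) <;> exact h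
    have hd01 : Disjoint (Finset.univ.filter (fun z => Γ.G.Adj y z ∧ Γ.G.dist x z = 0))
        (Finset.univ.filter (fun z => Γ.G.Adj y z ∧ Γ.G.dist x z = 1)) := by
      rw [Finset.disjoint_left]
      intro z hz0 hz1
      rw [Finset.mem_filter] at hz0 hz1
      omega
    have hd012 : Disjoint (Finset.univ.filter (fun z => Γ.G.Adj y z ∧ Γ.G.dist x z = 0)
          ∪ Finset.univ.filter (fun z => Γ.G.Adj y z ∧ Γ.G.dist x z = 1))
        (Finset.univ.filter (fun z => Γ.G.Adj y z ∧ Γ.G.dist x z = 2)) := by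
      rw [Finset.disjoint_left]
      intro z hz0 hz2
      rw [Finset.mem_union, Finset.mem_filter, Finset.mem_filter] at hz0
      rw [Finset.mem_filter] at hz2
      omega
    have hdy := hdeg y
    rw [hsplit, Finset.card_union_of_disjoint hd012, Finset.card_union_of_disjoint hd01] at hdy
    have hAy : A y = insert y (Finset.univ.filter (fun z => Γ.G.Adj y z ∧ Γ.G.dist x z = 1)) := by
      ext z
      simp only [hAdef, hNdef, Finset.mem_filter, Finset.mem_insert, Finset.mem_univ, true_and]
      constructor
      · rintro ⟨hxz, (rfl | hyz)⟩
        · exact Or.inl rfl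
        · exact Or.inr ⟨hyz, hA1 _ _ hxz⟩
      · rintro (rfl | ⟨hyz, hdz⟩)
        · exact ⟨hxy, Or.inl rfl⟩
        · exact ⟨SimpleGraph.dist_eq_one_iff_adj.mp hdz, Or.inr hyz⟩
    have hynot : y ∉ Finset.univ.filter (fun z => Γ.G.Adj y z ∧ Γ.G.dist x z = 1) := by
      rw [Finset.mem_filter]
      rintro ⟨-, hyy, -⟩
      exact Γ.G.irrefl hyy
    have hAcard' : (A y).card
        = (Finset.univ.filter (fun z => Γ.G.Adj y z ∧ Γ.G.dist x z = 1)).card + 1 := by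
      rw [hAy, Finset.card_insert_of_notMem hynot]
    omega
  -- pairwise bound
  have hW : ∀ y ∈ s, ∀ y' ∈ s, y ≠ y' → 1 ≤ Γ.c 2 ∧ (A y ∩ A y').card + 1 ≤ Γ.c 2 := by
    intro y hy y' hy' hne
    have hxy := hadj y hy
    have hxy' := hadj y' hy'
    have hd2 : Γ.G.dist y y' = 2 := by
      have hle : Γ.G.dist y y' ≤ 2 := by
        calc Γ.G.dist y y' ≤ Γ.G.dist y x + Γ.G.dist x y' := hconn.dist_triangle
        _ = 2 := by rw [hA1 _ _ hxy.symm, hA1 _ _ hxy']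
      have h0 : Γ.G.dist y y' ≠ 0 := fun h => hne (hconn.dist_eq_zero_iff.mp h)
      have h1 : Γ.G.dist y y' ≠ 1 := fun h =>
        hind y hy y' hy' hne (SimpleGraph.dist_eq_one_iff_adj.mp h)
      omega
    have hc : (Finset.univ.filter (fun z => Γ.G.Adj y' z ∧ Γ.G.dist y z = 1)).card = Γ.c 2 := by
      have h := Γ.count_c 2 y y' (by norm_num) hd2
      rw [← h]
      exact (hcount _ _ (fun z => Iff.rfl)).symm
    have hxW : x ∈ Finset.univ.filter (fun z => Γ.G.Adj y' z ∧ Γ.G.dist y z = 1) := by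
      rw [Finset.mem_filter]
      exact ⟨Finset.mem_univ x, hxy'.symm, hA1 _ _ hxy.symm⟩
    have hsub : A y ∩ A y'
        ⊆ (Finset.univ.filter (fun z => Γ.G.Adj y' z ∧ Γ.G.dist y z = 1)).erase x := by
      intro z hz
      rw [Finset.mem_inter] at hz
      obtain ⟨hz1, hz2⟩ := hz
      simp only [hAdef, hNdef, Finset.mem_filter, Finset.mem_univ, true_and] at hz1 hz2
      obtain ⟨hxz, hzy⟩ := hz1
      obtain ⟨-, hzy'⟩ := hz2
      have hzx : z ≠ x := fun h => Γ.G.irrefl (h ▸ hxz)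
      have hay : Γ.G.Adj y z := by
        rcases hzy with hzy | h
        · rcases hzy' with hzy' | h'
          · exact absurd (hzy.symm.trans hzy') hne
          · have hyy : Γ.G.Adj y' y := by rw [← hzy]; exact h'
            exact absurd hyy (hind y' hy' y hy (Ne.symm hne))
        · exact h
      have hay' : Γ.G.Adj y' z := by
        rcases hzy' with hzy' | h'
        · have hyy : Γ.G.Adj y y' := by rw [← hzy']; exact hay
          exact absurd hyy (hind y hy y' hy' hne)
        · exact h'
      rw [Finset.mem_erase, Finset.mem_filter]
      exact ⟨hzx, Finset.mem_univ z, hay', hA1 _ _ hay⟩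
    have h1 := Finset.card_le_card hsub
    rw [Finset.card_erase_of_mem hxW] at h1
    have h3 : 0 < (Finset.univ.filter (fun z => Γ.G.Adj y' z ∧ Γ.G.dist y z = 1)).card :=
      Finset.card_pos.mpr ⟨x, hxW⟩
    omega
  have hsne : ∃ y ∈ s, ∃ y' ∈ s, y ≠ y' := by
    have h1 : 1 < s.card := by omega
    rw [Finset.one_lt_card] at h1
    exact h1
  obtain ⟨y1, hy1, y2, hy2, hy12⟩ := hsne
  have hc2 : 1 ≤ Γ.c 2 := (hW y1 hy1 y2 hy2 hy12).1
  have hkb : Γ.b 1 + 1 ≤ Γ.k := (hAcard y1 hy1).2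
  -- double counting
  set d : V → ℕ := fun z => (s.filter (fun y => z = y ∨ Γ.G.Adj y z)).card with hddef
  have hS1 : ∑ y ∈ s, (A y).card = ∑ z ∈ N, d z := by
    simp only [hAdef, hddef, Finset.card_filter]
    exact Finset.sum_comm
  have hS2 : ∑ p ∈ s.offDiag, (A p.1 ∩ A p.2).card = ∑ z ∈ N, (d z * d z - d z) := by
    have step1 : ∑ p ∈ s.offDiag, (A p.1 ∩ A p.2).card
        = ∑ z ∈ N, ∑ p ∈ s.offDiag,
            (if (z = p.1 ∨ Γ.G.Adj p.1 z) ∧ (z = p.2 ∨ Γ.G.Adj p.2 z) then 1 else 0) := by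
      simp only [hAdef, ← Finset.filter_and, Finset.card_filter]
      exact Finset.sum_comm
    rw [step1]
    refine Finset.sum_congr rfl fun z _ => ?_
    rw [← Finset.card_filter]
    have heq : s.offDiag.filter
          (fun p => (z = p.1 ∨ Γ.G.Adj p.1 z) ∧ (z = p.2 ∨ Γ.G.Adj p.2 z))
        = (s.filter (fun y => z = y ∨ Γ.G.Adj y z)).offDiag := by
      ext ⟨a, b⟩
      simp only [Finset.mem_filter, Finset.mem_offDiag]
      tauto
    rw [heq, Finset.offDiag_card, hddef]
  have hpt : ∀ n : ℕ, 2 * n ≤ 2 + (n * n - n) := by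
    intro n
    rcases Nat.lt_or_ge n 2 with h | h
    · interval_cases n <;> norm_num
    · obtain ⟨e, rfl⟩ := Nat.exists_eq_add_of_le h
      have : (2 + e) * (2 + e) = e * e + 4 * e + 4 := by ring
      omega
  have hmain : 2 * ∑ z ∈ N, d z ≤ 2 * Γ.k + ∑ z ∈ N, (d z * d z - d z) := by
    calc 2 * ∑ z ∈ N, d z = ∑ z ∈ N, 2 * d z := Finset.mul_sum _ _ _
    _ ≤ ∑ z ∈ N, (2 + (d z * d z - d z)) := Finset.sum_le_sum fun z _ => hpt (d z)
    _ = 2 * N.card + ∑ z ∈ N, (d z * d z - d z) := by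
        rw [Finset.sum_add_distrib, Finset.sum_const, smul_eq_mul, mul_comm]
    _ = 2 * Γ.k + ∑ z ∈ N, (d z * d z - d z) := by rw [hN]
  have hL : ∑ y ∈ s, (A y).card = t * (Γ.k - Γ.b 1) := by
    rw [Finset.sum_congr rfl (fun y hy => (hAcard y hy).1), Finset.sum_const, smul_eq_mul, hcard]
  have hR : ∑ p ∈ s.offDiag, (A p.1 ∩ A p.2).card ≤ (t * t - t) * (Γ.c 2 - 1) := by
    calc ∑ p ∈ s.offDiag, (A p.1 ∩ A p.2).card ≤ ∑ _p ∈ s.offDiag, (Γ.c 2 - 1) := by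
          refine Finset.sum_le_sum fun p hp => ?_
          rw [Finset.mem_offDiag] at hp
          have := (hW p.1 hp.1 p.2 hp.2.1 hp.2.2).2
          omega
    _ = (t * t - t) * (Γ.c 2 - 1) := by
          rw [Finset.sum_const, smul_eq_mul, Finset.offDiag_card, hcard]
  have key : 2 * (t * (Γ.k - Γ.b 1)) ≤ 2 * Γ.k + (t * t - t) * (Γ.c 2 - 1) := by
    rw [← hL]
    calc 2 * ∑ y ∈ s, (A y).card = 2 * ∑ z ∈ N, d z := by rw [hS1]
    _ ≤ 2 * Γ.k + ∑ z ∈ N, (d z * d z - d z) := hmain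
    _ = 2 * Γ.k + ∑ p ∈ s.offDiag, (A p.1 ∩ A p.2).card := by rw [hS2]
    _ ≤ 2 * Γ.k + (t * t - t) * (Γ.c 2 - 1) := by omega
  -- transfer to ℝ
  have hch : 2 * t.choose 2 = t * t - t := by
    rw [Nat.choose_two_right]
    have hdvd : 2 ∣ t * (t - 1) := by
      have he := Nat.even_mul_succ_self (t - 1)
      rw [(by omega : t - 1 + 1 = t)] at he
      rw [mul_comm]
      exact he.two_dvd
    rw [Nat.mul_div_cancel' hdvd, Nat.mul_sub, mul_one]
  have hC : (0:ℝ) < (t.choose 2 : ℝ) := by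
    have h1 : 0 < t.choose 2 := Nat.choose_pos ht
    exact_mod_cast h1
  rw [← le_sub_iff_add_le, div_le_iff₀ hC]
  have ha1 : (Γ.a1 : ℝ) = (Γ.k : ℝ) - (Γ.b 1 : ℝ) - 1 := by
    rw [DRG.a1]; push_cast; ring
  have htt : t ≤ t * t := Nat.le_mul_of_pos_left t (by omega)
  have hbk : Γ.b 1 ≤ Γ.k := by omega
  rify [hbk, hc2, htt] at key hch
  have h3 : ((t:ℝ) * t - t) * ((Γ.c 2:ℝ) - 1)
      = 2 * (t.choose 2:ℝ) * ((Γ.c 2:ℝ) - 1) := by rw [← hch]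
  rw [ha1]
  nlinarith [key, h3, hch]
end

section
/- For a distance-regular graph Γ with diameter D ≥ 4, the second largest distinct eigenvalue θ_1 satisfies θ_1 ≥ a_1 + 1. More precisely, θ_1 ≥ (a_1 + √(a_1² + 4k))/2. -/
open scoped Classical

section SecondEigAux
open Finset Matrix
set_option linter.unusedSectionVars false

namespace SecondEigAux

variable {V : Type} [Fintype V] [DecidableEq V]

section GraphAux
variable (G : SimpleGraph V)

/-- eigenvalues of a k-regular graph are ≤ k -/
lemma eig_le_k [Nonempty V] (k : ℕ) (hreg : ∀ x : V, (G.neighborFinset x).card = k)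
    (θ : ℝ) (v : V → ℝ) (hv : v ≠ 0) (heig : (SimpleGraph.adjMatrix ℝ G) *ᵥ v = θ • v) :
    θ ≤ k := by
  obtain ⟨x, -, hx⟩ := Finset.exists_max_image Finset.univ (fun y => |v y|) ⟨Classical.arbitrary V, Finset.mem_univ _⟩
  have hxpos : 0 < |v x| := by
    rcases Function.ne_iff.mp hv with ⟨y, hy⟩
    exact lt_of_lt_of_le (abs_pos.mpr hy) (hx y (Finset.mem_univ y))
  have h1 : θ * v x = ∑ u ∈ G.neighborFinset x, v u := by
    have := congrFun heig x
    simp only [SimpleGraph.adjMatrix_mulVec_apply, Pi.smul_apply, smul_eq_mul] at this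
    linarith [this]
  have h2 : |θ| * |v x| ≤ (k : ℝ) * |v x| := by
    rw [← abs_mul, h1]
    calc |∑ u ∈ G.neighborFinset x, v u| ≤ ∑ u ∈ G.neighborFinset x, |v u| :=
          Finset.abs_sum_le_sum_abs _ _
      _ ≤ ∑ u ∈ G.neighborFinset x, |v x| :=
          Finset.sum_le_sum (fun u _ => hx u (Finset.mem_univ u))
      _ = (k : ℝ) * |v x| := by rw [Finset.sum_const, hreg, nsmul_eq_mul]
  have : |θ| ≤ (k : ℝ) := le_of_mul_le_mul_right h2 hxpos
  exact le_trans (le_abs_self θ) this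

/-- k-eigenvectors of a connected k-regular graph are constant -/
lemma k_eig_const [Nonempty V] (hconn : G.Connected) (k : ℕ)
    (hreg : ∀ x : V, (G.neighborFinset x).card = k)
    (v : V → ℝ) (heig : (SimpleGraph.adjMatrix ℝ G) *ᵥ v = (k : ℝ) • v) :
    ∀ x y : V, v x = v y := by
  obtain ⟨x0, -, hx0⟩ := Finset.exists_max_image Finset.univ v ⟨Classical.arbitrary V, Finset.mem_univ _⟩
  set M := v x0 with hM
  have step : ∀ x : V, v x = M → ∀ y : V, G.Adj x y → v y = M := by
    intro x hvx y hxy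
    have h1 : ∑ u ∈ G.neighborFinset x, v u = (k : ℝ) * M := by
      have := congrFun heig x
      simp only [SimpleGraph.adjMatrix_mulVec_apply, Pi.smul_apply, smul_eq_mul] at this
      rw [this, hvx]
    by_contra hne
    have hylt : v y < M := lt_of_le_of_ne (hx0 y (Finset.mem_univ y)) hne
    have hlt : ∑ u ∈ G.neighborFinset x, v u < ∑ u ∈ G.neighborFinset x, M := by
      apply Finset.sum_lt_sum
      · exact fun u _ => hx0 u (Finset.mem_univ u)
      · exact ⟨y, (SimpleGraph.mem_neighborFinset _ _ _).mpr hxy, hylt⟩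
    rw [h1, Finset.sum_const, hreg, nsmul_eq_mul] at hlt
    exact lt_irrefl _ hlt
  have walkprop : ∀ {a b : V} (p : G.Walk a b), v a = M → v b = M := by
    intro a b p
    induction p with
    | nil => exact id
    | cons h q ih => exact fun ha => ih (step _ ha _ h)
  have all : ∀ y : V, v y = M := by
    intro y
    obtain ⟨p⟩ := hconn x0 y
    exact walkprop p rfl
  intro x y; rw [all x, all y]

end GraphAux


noncomputable def wv (G : SimpleGraph V) (c : V) (t : ℝ) : V → ℝ :=
  fun u => if u = c then t else if u ∈ G.neighborFinset c then 1 else 0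

variable (G : SimpleGraph V) (c : V) (t : ℝ)

lemma wv_sum_mul (g : V → ℝ) :
    ∑ u, wv G c t u * g u = t * g c + ∑ u ∈ G.neighborFinset c, g u := by
  classical
  have hsub : ∑ u, wv G c t u * g u = ∑ u ∈ insert c (G.neighborFinset c), wv G c t u * g u := by
    refine (Finset.sum_subset (Finset.subset_univ _) ?_).symm
    intro u _ hu
    simp only [Finset.mem_insert, not_or] at hu
    simp [wv, hu.1, hu.2]
  rw [hsub, Finset.sum_insert (SimpleGraph.notMem_neighborFinset_self G c)]
  congr 1
  · simp [wv]
  · apply Finset.sum_congr rfl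
    intro u hu
    have hne : u ≠ c := by
      intro h; rw [h] at hu; exact SimpleGraph.notMem_neighborFinset_self G c hu
    simp [wv, hne, hu]

lemma wv_supp {u : V} (h : wv G c t u ≠ 0) : G.dist c u ≤ 1 := by
  by_cases h1 : u = c
  · subst h1; simp [SimpleGraph.dist_self]
  · by_cases h2 : u ∈ G.neighborFinset c
    · rw [SimpleGraph.mem_neighborFinset] at h2
      rw [SimpleGraph.dist_eq_one_iff_adj.mpr h2]
    · exact absurd (by simp [wv, h1, h2]) h

lemma wv_sum : ∑ u, wv G c t u = t + (G.neighborFinset c).card := by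
  have := wv_sum_mul G c t (fun _ => 1)
  simpa using this

lemma wv_dot_self : wv G c t ⬝ᵥ wv G c t = t^2 + (G.neighborFinset c).card := by
  show ∑ u, wv G c t u * wv G c t u = _
  rw [wv_sum_mul G c t (wv G c t)]
  have h1 : wv G c t c = t := by simp [wv]
  have h2 : ∑ u ∈ G.neighborFinset c, wv G c t u = (G.neighborFinset c).card := by
    rw [Finset.card_eq_sum_ones]
    push_cast
    apply Finset.sum_congr rfl
    intro u hu
    have hne : u ≠ c := by
      intro h; rw [h] at hu; exact SimpleGraph.notMem_neighborFinset_self G c hu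
    simp [wv, hne, hu]
  rw [h1, h2]; ring

lemma wv_quad (k a1c : ℕ) (hreg : ∀ x : V, (G.neighborFinset x).card = k)
    (ha1 : ∀ u ∈ G.neighborFinset c, ((G.neighborFinset u).filter (· ∈ G.neighborFinset c)).card = a1c) :
    wv G c t ⬝ᵥ ((SimpleGraph.adjMatrix ℝ G) *ᵥ wv G c t) = t * k + k * (t + a1c) := by
  show ∑ u, wv G c t u * ((SimpleGraph.adjMatrix ℝ G) *ᵥ wv G c t) u = _
  rw [wv_sum_mul G c t _]
  have hones : ∀ S : Finset V, c ∉ S → ∑ v ∈ S, wv G c t v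
      = ((S.filter (· ∈ G.neighborFinset c)).card : ℝ) := by
    intro S hc
    rw [← Finset.sum_boole]
    apply Finset.sum_congr rfl
    intro v hv
    have hne : v ≠ c := fun h => hc (h ▸ hv)
    simp [wv, hne]
  have hgc : ((SimpleGraph.adjMatrix ℝ G) *ᵥ wv G c t) c = k := by
    rw [SimpleGraph.adjMatrix_mulVec_apply]
    rw [hones _ (SimpleGraph.notMem_neighborFinset_self G c)]
    rw [Finset.filter_true_of_mem (fun v hv => hv), hreg]
  have hgu : ∀ u ∈ G.neighborFinset c, ((SimpleGraph.adjMatrix ℝ G) *ᵥ wv G c t) u = t + a1c := by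
    intro u hu
    rw [SimpleGraph.adjMatrix_mulVec_apply]
    have hcu : c ∈ G.neighborFinset u := by
      rw [SimpleGraph.mem_neighborFinset] at hu ⊢
      exact hu.symm
    rw [← Finset.add_sum_erase _ _ hcu]
    have h1 : wv G c t c = t := by simp [wv]
    have h2 : ∑ v ∈ (G.neighborFinset u).erase c, wv G c t v
        = (((G.neighborFinset u).erase c).filter (· ∈ G.neighborFinset c)).card := by
      exact hones _ (Finset.notMem_erase c _)
    have h3 : (((G.neighborFinset u).erase c).filter (· ∈ G.neighborFinset c))
        = ((G.neighborFinset u).filter (· ∈ G.neighborFinset c)) := by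
      rw [Finset.filter_erase]
      apply Finset.erase_eq_of_notMem
      simp
    rw [h1, h2, h3, ha1 u hu]
  rw [hgc]
  rw [Finset.sum_congr rfl hgu]
  rw [Finset.sum_const, hreg, nsmul_eq_mul]


/-- extraction of an eigenvalue ≥ ρ other than k via spectral decomposition -/
lemma exists_eig_ge [Nonempty V] (G : SimpleGraph V) (hconn : G.Connected) (k : ℕ)
    (hreg : ∀ x : V, (G.neighborFinset x).card = k)
    (ρ : ℝ) (z : V → ℝ) (hz : z ≠ 0) (hsum : ∑ u, z u = 0)
    (hq : z ⬝ᵥ ((SimpleGraph.adjMatrix ℝ G) *ᵥ z) = ρ * (z ⬝ᵥ z)) :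
    ∃ (θ : ℝ) (w : V → ℝ), w ≠ 0 ∧ (SimpleGraph.adjMatrix ℝ G) *ᵥ w = θ • w ∧
      θ ≠ (k : ℝ) ∧ ρ ≤ θ := by
  set A : Matrix V V ℝ := SimpleGraph.adjMatrix ℝ G with hA
  have hherm : A.IsHermitian := by
    rw [Matrix.IsHermitian, Matrix.conjTranspose]
    ext i j
    simp [A, Matrix.transpose_apply, SimpleGraph.adjMatrix_apply, SimpleGraph.adj_comm]
  set u : V → V → ℝ := fun j => ⇑(hherm.eigenvectorBasis j) with hu
  set θv : V → ℝ := hherm.eigenvalues with hθ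
  have heig : ∀ j, A *ᵥ u j = θv j • u j := fun j => hherm.mulVec_eigenvectorBasis j
  -- completeness: ∑ j, u j v * u j w = δ v w
  have hU := (hherm.eigenvectorUnitary).2
  have hcomp : ∀ v w : V, ∑ j, u j v * u j w = if v = w then (1:ℝ) else 0 := by
    intro v w
    have h1 := congrFun (congrFun ((Matrix.mem_unitaryGroup_iff).mp hU) v) w
    simp only [Matrix.mul_apply, Matrix.star_eq_conjTranspose, Matrix.conjTranspose_apply,
      star_trivial, Matrix.one_apply, Matrix.IsHermitian.eigenvectorUnitary_apply] at h1
    rw [← h1]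
  -- orthonormality (diagonal): ∑ v, u j v * u j v = 1
  have hnorm1 : ∀ j, ∑ v, u j v * u j v = 1 := by
    intro j
    have h1 := congrFun (congrFun ((Matrix.mem_unitaryGroup_iff').mp hU) j) j
    simp only [Matrix.mul_apply, Matrix.star_eq_conjTranspose, Matrix.conjTranspose_apply,
      star_trivial, Matrix.one_apply, eq_self_iff_true, if_true,
      Matrix.IsHermitian.eigenvectorUnitary_apply] at h1
    exact h1
  -- expansion lemma
  have key : ∀ f g : V → ℝ, f ⬝ᵥ g = ∑ j, (u j ⬝ᵥ f) * (u j ⬝ᵥ g) := by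
    intro f g
    have : ∀ j, (u j ⬝ᵥ f) * (u j ⬝ᵥ g) = ∑ v, ∑ w, (u j v * u j w) * (f v * g w) := by
      intro j
      simp only [dotProduct]
      rw [Finset.sum_mul_sum]
      apply Finset.sum_congr rfl; intro v _
      apply Finset.sum_congr rfl; intro w _
      ring
    rw [Finset.sum_congr rfl (fun j _ => this j)]
    rw [Finset.sum_comm]
    have : ∀ v, ∑ j, ∑ w, (u j v * u j w) * (f v * g w) = f v * g v := by
      intro v
      rw [Finset.sum_comm]
      have : ∀ w, ∑ j, (u j v * u j w) * (f v * g w) = (if v = w then (1:ℝ) else 0) * (f v * g w) := by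
        intro w
        rw [← Finset.sum_mul, hcomp]
      rw [Finset.sum_congr rfl (fun w _ => this w)]
      simp
    rw [Finset.sum_congr rfl (fun v _ => this v)]
    rfl
  set c : V → ℝ := fun j => u j ⬝ᵥ z with hc
  have hnormsq : z ⬝ᵥ z = ∑ j, c j ^ 2 := by
    rw [key z z]; apply Finset.sum_congr rfl; intro j _; rw [sq]
  have hquad : z ⬝ᵥ (A *ᵥ z) = ∑ j, θv j * c j ^ 2 := by
    rw [key z (A *ᵥ z)]
    apply Finset.sum_congr rfl
    intro j _
    have h1 : u j ⬝ᵥ (A *ᵥ z) = θv j * c j := by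
      rw [Matrix.dotProduct_mulVec]
      have h2 : u j ᵥ* A = θv j • u j := by
        rw [← heig j]
        ext v
        simp [A, SimpleGraph.adjMatrix_mulVec_apply, SimpleGraph.adjMatrix_vecMul_apply]
      rw [h2, smul_dotProduct]
      rfl
    rw [h1]; ring
  have hzz : 0 < z ⬝ᵥ z := by
    rcases Function.ne_iff.mp hz with ⟨v0, hv0⟩
    have : 0 < ∑ v, z v * z v := by
      apply Finset.sum_pos' (fun v _ => mul_self_nonneg _)
      exact ⟨v0, Finset.mem_univ _, mul_self_pos.mpr (by simpa using hv0)⟩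
    exact this
  -- coefficients at eigenvalue k vanish
  have hkzero : ∀ j, θv j = (k : ℝ) → c j = 0 := by
    intro j hjk
    have hconst := k_eig_const G hconn k hreg (u j) (by rw [heig j, hjk])
    obtain v0 : V := Classical.arbitrary V
    have : c j = u j v0 * ∑ v, z v := by
      simp only [hc, dotProduct]
      rw [Finset.mul_sum]
      apply Finset.sum_congr rfl
      intro v _
      rw [hconst v v0]
    rw [this, hsum, mul_zero]
  -- extract
  by_contra hcon
  push_neg at hcon
  have hlt : ∀ j, c j ≠ 0 → θv j < ρ := by
    intro j hcj
    by_contra hge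
    push_neg at hge
    have hne : θv j ≠ (k : ℝ) := fun h => hcj (hkzero j h)
    have hujne : u j ≠ 0 := by
      intro h0
      have := hnorm1 j
      rw [h0] at this; simp at this
    exact absurd hge (by
      have := hcon (θv j) (u j) hujne (heig j) hne
      exact not_le.mpr this)
  have hex : ∃ j, c j ≠ 0 := by
    by_contra hall
    push_neg at hall
    rw [hnormsq] at hzz
    have : ∑ j, c j ^ 2 = 0 := by
      apply Finset.sum_eq_zero; intro j _; rw [hall j]; ring
    rw [this] at hzz; exact lt_irrefl _ hzz
  obtain ⟨j0, hj0⟩ := hex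
  have hstrict : ∑ j, θv j * c j ^ 2 < ∑ j, ρ * c j ^ 2 := by
    apply Finset.sum_lt_sum
    · intro j _
      rcases eq_or_ne (c j) 0 with h | h
      · rw [h]; simp
      · have := hlt j h
        have hsq : 0 < c j ^ 2 := by positivity
        nlinarith
    · refine ⟨j0, Finset.mem_univ _, ?_⟩
      have := hlt j0 hj0
      have hsq : 0 < c j0 ^ 2 := by positivity
      nlinarith
  rw [← hquad, ← Finset.mul_sum, ← hnormsq, hq] at hstrict
  exact lt_irrefl _ hstrict


variable (Γ : DRG V)

/-- regularity -/
lemma deg_eq (x : V) : (Γ.G.neighborFinset x).card = Γ.k := by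
  have h := Γ.count_b 0 x x (by simp)
  rw [Nat.card_eq_fintype_card, Fintype.card_subtype] at h
  unfold DRG.k
  rw [← h]
  congr 1
  ext z
  simp [SimpleGraph.dist_eq_one_iff_adj]

/-- the a1-count -/
lemma a1_count {x y : V} (hxy : Γ.G.Adj x y) :
    ((Γ.G.neighborFinset y).filter (· ∈ Γ.G.neighborFinset x)).card + 1 + Γ.b 1 = Γ.k := by
  have hd1 : Γ.G.dist x y = 1 := SimpleGraph.dist_eq_one_iff_adj.mpr hxy
  have hb := Γ.count_b 1 x y hd1
  rw [Nat.card_eq_fintype_card, Fintype.card_subtype] at hb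
  -- every neighbor z of y has dist x z ≤ 2
  have hle2 : ∀ z ∈ Γ.G.neighborFinset y, Γ.G.dist x z ≤ 2 := by
    intro z hz
    rw [SimpleGraph.mem_neighborFinset] at hz
    calc Γ.G.dist x z ≤ Γ.G.dist x y + Γ.G.dist y z := Γ.conn.dist_triangle
      _ ≤ 1 + 1 := by
          rw [hd1, SimpleGraph.dist_eq_one_iff_adj.mpr hz]
      _ = 2 := rfl
  classical
  have hsplit : (Γ.G.neighborFinset y).card
      = ((Γ.G.neighborFinset y).filter (fun z => Γ.G.dist x z = 1)).card
      + ((Γ.G.neighborFinset y).filter (fun z => ¬ Γ.G.dist x z = 1)).card := by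
    rw [Finset.card_filter_add_card_filter_not]
  have hsplit2 : ((Γ.G.neighborFinset y).filter (fun z => ¬ Γ.G.dist x z = 1)).card
      = (((Γ.G.neighborFinset y).filter (fun z => ¬ Γ.G.dist x z = 1)).filter
          (fun z => Γ.G.dist x z = 0)).card
      + (((Γ.G.neighborFinset y).filter (fun z => ¬ Γ.G.dist x z = 1)).filter
          (fun z => ¬ Γ.G.dist x z = 0)).card := by
    rw [Finset.card_filter_add_card_filter_not]
  have h0 : (((Γ.G.neighborFinset y).filter (fun z => ¬ Γ.G.dist x z = 1)).filter
          (fun z => Γ.G.dist x z = 0)) = {x} := by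
    ext z
    simp only [Finset.mem_filter, SimpleGraph.mem_neighborFinset, Finset.mem_singleton]
    constructor
    · rintro ⟨⟨hzy, -⟩, h0⟩
      exact (Γ.conn.dist_eq_zero_iff.mp h0).symm
    · rintro rfl
      refine ⟨⟨hxy.symm, ?_⟩, by simp⟩
      simp [SimpleGraph.dist_self]
  have h2 : (((Γ.G.neighborFinset y).filter (fun z => ¬ Γ.G.dist x z = 1)).filter
          (fun z => ¬ Γ.G.dist x z = 0))
      = Finset.univ.filter (fun z => Γ.G.Adj y z ∧ Γ.G.dist x z = 1 + 1) := by
    ext z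
    simp only [Finset.mem_filter, SimpleGraph.mem_neighborFinset, Finset.mem_univ, true_and]
    constructor
    · rintro ⟨⟨hzy, h1⟩, h0⟩
      refine ⟨hzy, ?_⟩
      have := hle2 z (by rwa [SimpleGraph.mem_neighborFinset])
      omega
    · rintro ⟨hzy, h2⟩
      exact ⟨⟨hzy, by omega⟩, by omega⟩
  have hfil : ((Γ.G.neighborFinset y).filter (fun z => Γ.G.dist x z = 1))
      = ((Γ.G.neighborFinset y).filter (· ∈ Γ.G.neighborFinset x)) := by
    congr 1
    ext z
    simp [SimpleGraph.dist_eq_one_iff_adj]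
  have c0 : (((Γ.G.neighborFinset y).filter (fun z => ¬ Γ.G.dist x z = 1)).filter
          (fun z => Γ.G.dist x z = 0)).card = 1 := by rw [h0]; simp
  have c2 : (((Γ.G.neighborFinset y).filter (fun z => ¬ Γ.G.dist x z = 1)).filter
          (fun z => ¬ Γ.G.dist x z = 0)).card = Γ.b 1 := by rw [h2]; exact hb
  have c1 : ((Γ.G.neighborFinset y).filter (fun z => Γ.G.dist x z = 1)).card
      = ((Γ.G.neighborFinset y).filter (· ∈ Γ.G.neighborFinset x)).card := by rw [hfil]
  have hdeg := deg_eq Γ y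
  omega



end SecondEigAux
end SecondEigAux

set_option maxHeartbeats 1000000 in
theorem second_eigenvalue_lower_bound_diam_ge_four {V : Type} [Fintype V] [DecidableEq V]
    (Γ : DRG V) (hD : 4 ≤ Γ.diam)
    (θ1 : ℝ) (hEig : Γ.IsEig θ1) (hlt : θ1 < (Γ.k : ℝ))
    (hmax : ∀ θ : ℝ, Γ.IsEig θ → θ < (Γ.k : ℝ) → θ ≤ θ1) :
    ((Γ.a1 : ℝ) + Real.sqrt ((Γ.a1 : ℝ) ^ 2 + 4 * (Γ.k : ℝ))) / 2 ≤ θ1 ∧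
    (Γ.a1 : ℝ) + 1 ≤ θ1 := by
  classical
  open Finset Matrix SecondEigAux in
  obtain ⟨x0, y0, hdia⟩ := Γ.dist_attained
  set G := Γ.G with hG
  have h4 : 4 ≤ G.dist x0 y0 := by rw [hdia]; exact hD
  have hNV : Nonempty V := ⟨x0⟩
  have hreg : ∀ x : V, (G.neighborFinset x).card = Γ.k := fun x => deg_eq Γ x
  have hne0 : x0 ≠ y0 := by
    intro h; rw [h] at h4; rw [SimpleGraph.dist_self] at h4; omega
  obtain ⟨p⟩ := Γ.conn.preconnected x0 y0
  have hedge : ∃ b, G.Adj x0 b := by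
    cases p with
    | nil => exact absurd rfl hne0
    | cons h q => exact ⟨_, h⟩
  obtain ⟨b0, hb0⟩ := hedge
  have ha1b := a1_count Γ hb0
  have hkpos : 1 ≤ Γ.k := by
    rw [← hreg x0]
    exact Finset.card_pos.mpr ⟨b0, (SimpleGraph.mem_neighborFinset _ _ _).mpr hb0⟩
  set a1c : ℕ := Γ.k - 1 - Γ.b 1 with ha1cdef
  have hksum : a1c + 1 + Γ.b 1 = Γ.k := by omega
  have ha1all : ∀ {x y : V}, G.Adj x y →
      ((G.neighborFinset y).filter (· ∈ G.neighborFinset x)).card = a1c := by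
    intro x y hxy
    have := a1_count Γ hxy
    rw [← hG] at this
    omega
  set aR : ℝ := ((Γ.a1 : ℤ) : ℝ) with haRdef
  have ha1cast : (a1c : ℝ) = aR := by
    have h1 : (a1c : ℤ) = Γ.a1 := by unfold DRG.a1; omega
    rw [haRdef, ← h1]
    push_cast
    ring
  have haRnn : 0 ≤ aR := by rw [← ha1cast]; positivity
  have hkaR : aR + 1 ≤ (Γ.k : ℝ) := by
    rw [← ha1cast]
    have : a1c + 1 ≤ Γ.k := by omega
    exact_mod_cast this
  set s := Real.sqrt (aR ^ 2 + 4 * (Γ.k : ℝ)) with hsdef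
  have hs0 : 0 ≤ s := Real.sqrt_nonneg _
  have hs2 : s ^ 2 = aR ^ 2 + 4 * (Γ.k : ℝ) := Real.sq_sqrt (by positivity)
  set t := (s - aR) / 2 with htdef
  set ρ := (aR + s) / 2 with hρdef
  have hkR : (1 : ℝ) ≤ (Γ.k : ℝ) := by exact_mod_cast hkpos
  have htpos : 0 < t := by
    rw [htdef]
    have : aR < s := by nlinarith
    linarith
  -- the test vector
  set wx := wv G x0 t with hwx
  set wy := wv G y0 t with hwy
  set z : V → ℝ := wx - wy with hz
  -- supports are far apart
  have hfar : ∀ u v : V, wx u ≠ 0 → wy v ≠ 0 → u ≠ v ∧ ¬ G.Adj u v := by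
    intro u v hu hv
    have hdu : G.dist x0 u ≤ 1 := wv_supp G x0 t hu
    have hdv : G.dist y0 v ≤ 1 := wv_supp G y0 t hv
    constructor
    · intro h
      subst h
      have : G.dist x0 y0 ≤ G.dist x0 u + G.dist u y0 := Γ.conn.dist_triangle
      rw [SimpleGraph.dist_comm (u := u) (v := y0)] at this
      omega
    · intro hadj
      have h1 : G.dist x0 y0 ≤ G.dist x0 u + G.dist u y0 := Γ.conn.dist_triangle
      have h2 : G.dist u y0 ≤ G.dist u v + G.dist v y0 := Γ.conn.dist_triangle
      have h3 : G.dist u v = 1 := SimpleGraph.dist_eq_one_iff_adj.mpr hadj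
      rw [SimpleGraph.dist_comm (u := v) (v := y0)] at h2
      omega
  have hdisj : ∀ u : V, wx u * wy u = 0 := by
    intro u
    by_cases h1 : wx u = 0
    · rw [h1, zero_mul]
    · by_cases h2 : wy u = 0
      · rw [h2, mul_zero]
      · exact absurd rfl (hfar u u h1 h2).1
  have hcross1 : wx ⬝ᵥ ((SimpleGraph.adjMatrix ℝ G) *ᵥ wy) = 0 := by
    apply Finset.sum_eq_zero
    intro u _
    by_cases h1 : wx u = 0
    · rw [h1, zero_mul]
    · have : ((SimpleGraph.adjMatrix ℝ G) *ᵥ wy) u = 0 := by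
        rw [SimpleGraph.adjMatrix_mulVec_apply]
        apply Finset.sum_eq_zero
        intro v hv
        rw [SimpleGraph.mem_neighborFinset] at hv
        by_contra h2
        exact (hfar u v h1 h2).2 hv
      rw [this, mul_zero]
  have hcross2 : wy ⬝ᵥ ((SimpleGraph.adjMatrix ℝ G) *ᵥ wx) = 0 := by
    apply Finset.sum_eq_zero
    intro u _
    by_cases h1 : wy u = 0
    · rw [h1, zero_mul]
    · have : ((SimpleGraph.adjMatrix ℝ G) *ᵥ wx) u = 0 := by
        rw [SimpleGraph.adjMatrix_mulVec_apply]
        apply Finset.sum_eq_zero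
        intro v hv
        rw [SimpleGraph.mem_neighborFinset] at hv
        by_contra h2
        exact (hfar v u h2 h1).2 hv.symm
      rw [this, mul_zero]
  have hdisj' : wx ⬝ᵥ wy = 0 := Finset.sum_eq_zero (fun u _ => hdisj u)
  have hdisj'' : wy ⬝ᵥ wx = 0 := by rw [dotProduct_comm]; exact hdisj'
  -- z is nonzero
  have hzx0 : z x0 = t := by
    have h1 : wx x0 = t := by simp [hwx, wv]
    have h2 : wy x0 = 0 := by
      have hnadj : x0 ∉ G.neighborFinset y0 := by
        rw [SimpleGraph.mem_neighborFinset]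
        intro hadj
        have : G.dist x0 y0 = 1 := SimpleGraph.dist_eq_one_iff_adj.mpr hadj.symm
        omega
      simp [hwy, wv, hne0, hnadj]
    simp [hz, h1, h2]
  have hzne : z ≠ 0 := by
    intro h
    rw [h] at hzx0
    simp at hzx0
    rw [← hzx0] at htpos
    exact lt_irrefl _ htpos
  -- sum of z is zero
  have hzsum : ∑ u, z u = 0 := by
    have : ∑ u, z u = (∑ u, wx u) - ∑ u, wy u := by
      rw [← Finset.sum_sub_distrib]
      rfl
    rw [this, hwx, hwy, wv_sum, wv_sum, hreg, hreg]
    ring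
  -- quadratic form
  have ha1x : ∀ u ∈ G.neighborFinset x0,
      ((G.neighborFinset u).filter (· ∈ G.neighborFinset x0)).card = a1c := by
    intro u hu
    exact ha1all ((SimpleGraph.mem_neighborFinset _ _ _).mp hu)
  have ha1y : ∀ u ∈ G.neighborFinset y0,
      ((G.neighborFinset u).filter (· ∈ G.neighborFinset y0)).card = a1c := by
    intro u hu
    exact ha1all ((SimpleGraph.mem_neighborFinset _ _ _).mp hu)
  have hqx : wx ⬝ᵥ ((SimpleGraph.adjMatrix ℝ G) *ᵥ wx) = t * Γ.k + Γ.k * (t + a1c) :=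
    wv_quad G x0 t Γ.k a1c hreg ha1x
  have hqy : wy ⬝ᵥ ((SimpleGraph.adjMatrix ℝ G) *ᵥ wy) = t * Γ.k + Γ.k * (t + a1c) :=
    wv_quad G y0 t Γ.k a1c hreg ha1y
  have hzz : z ⬝ᵥ z = 2 * (t ^ 2 + Γ.k) := by
    rw [hz, sub_dotProduct, dotProduct_sub, dotProduct_sub,
      hdisj', hdisj'', wv_dot_self, wv_dot_self, hreg, hreg]
    ring
  have hzAz : z ⬝ᵥ ((SimpleGraph.adjMatrix ℝ G) *ᵥ z) = 2 * (t * Γ.k + Γ.k * (t + a1c)) := by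
    rw [hz, Matrix.mulVec_sub, sub_dotProduct, dotProduct_sub,
      dotProduct_sub, hqx, hqy, hcross1, hcross2]
    ring
  have hq : z ⬝ᵥ ((SimpleGraph.adjMatrix ℝ G) *ᵥ z) = ρ * (z ⬝ᵥ z) := by
    rw [hzAz, hzz, ha1cast, hρdef, htdef]
    nlinarith [hs2, hs0, haRnn, hkR]
  -- extract the eigenvalue
  obtain ⟨θ, w, hw0, hweig, hwne, hwge⟩ :=
    exists_eig_ge G Γ.conn Γ.k hreg ρ z hzne hzsum hq
  have hθEig : Γ.IsEig θ := ⟨w, hw0, hweig⟩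
  have hθle : θ ≤ (Γ.k : ℝ) := eig_le_k G Γ.k hreg θ w hw0 hweig
  have hθlt : θ < (Γ.k : ℝ) := lt_of_le_of_ne hθle hwne
  have hρθ1 : ρ ≤ θ1 := le_trans hwge (hmax θ hθEig hθlt)
  have hpart1 : ((Γ.a1 : ℝ) + Real.sqrt ((Γ.a1 : ℝ) ^ 2 + 4 * (Γ.k : ℝ))) / 2 ≤ θ1 := by
    rw [hρdef] at hρθ1
    exact hρθ1
  refine ⟨hpart1, ?_⟩
  have hsge : aR + 2 ≤ s := by nlinarith [hs2, hs0, hkaR, haRnn]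
  have : aR + 1 ≤ ρ := by rw [hρdef]; linarith
  calc (Γ.a1 : ℝ) + 1 = aR + 1 := rfl
    _ ≤ ρ := this
    _ ≤ θ1 := hρθ1
end

section
/- Let Γ be a distance-regular graph with distinct eigenvalues k = θ_0 > θ_1 > ⋯ > θ_D. Then θ_1 ≥ max{-1, k - b_1 - c_2, k - b_2 - c_3, …, k - b_{D-1} - c_D}. -/
open scoped Classical

namespace DRGaux
open Finset
open scoped RealInnerProductSpace
variable {V : Type} [Fintype V] [DecidableEq V]

lemma adjMat_symm (Γ : DRG V) (u u' : V) : Γ.adjMat u u' = Γ.adjMat u' u := by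
  simp [DRG.adjMat, SimpleGraph.adjMatrix_apply, SimpleGraph.adj_comm]

lemma adjMat_of_adj (Γ : DRG V) {u u' : V} (h : Γ.G.Adj u u') : Γ.adjMat u u' = 1 := by
  simp [DRG.adjMat, SimpleGraph.adjMatrix_apply, h]

lemma adjMat_of_not_adj (Γ : DRG V) {u u' : V} (h : ¬ Γ.G.Adj u u') : Γ.adjMat u u' = 0 := by
  simp [DRG.adjMat, SimpleGraph.adjMatrix_apply, h]

lemma adjMat_self (Γ : DRG V) (u : V) : Γ.adjMat u u = 0 :=
  adjMat_of_not_adj Γ (Γ.G.irrefl)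

lemma mulVec_sum (Γ : DRG V) (v : V → ℝ) (u : V) :
    Γ.adjMat.mulVec v u = ∑ u', Γ.adjMat u u' * v u' := rfl

lemma edge_vec (Γ : DRG V) {x z : V} (h : Γ.G.Adj x z)
    (e0 : V → ℝ) (he0 : e0 = fun u => if u = x then 1 else if u = z then -1 else 0) :
    (∑ u, e0 u = 0) ∧ e0 ≠ 0 ∧
      (-1 : ℝ) * (∑ u, e0 u * e0 u) ≤ ∑ u, (Γ.adjMat.mulVec e0 u) * e0 u := by
  have hxz : x ≠ z := h.ne
  have he0x : e0 x = 1 := by rw [he0]; simp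
  have he0z : e0 z = -1 := by rw [he0]; simp [Ne.symm hxz]
  have hsplit : ∀ u, e0 u = (if u = x then (1:ℝ) else 0) + (if u = z then (-1:ℝ) else 0) := by
    intro u
    rw [he0]
    by_cases h1 : u = x
    · subst h1; simp [hxz]
    · by_cases h2 : u = z <;> simp [h1, h2, hxz, Ne.symm hxz]
  refine ⟨?_, ?_, ?_⟩
  · rw [Finset.sum_congr rfl fun u _ => hsplit u, Finset.sum_add_distrib,
      Finset.sum_ite_eq' Finset.univ x (fun _ => (1:ℝ)),
      Finset.sum_ite_eq' Finset.univ z (fun _ => (-1:ℝ))]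
    simp
  · intro hcon
    have := congrFun hcon x
    rw [he0x] at this
    simp at this
  · have hmv : ∀ u, Γ.adjMat.mulVec e0 u = Γ.adjMat u x - Γ.adjMat u z := by
      intro u
      rw [mulVec_sum]
      have : ∀ u', Γ.adjMat u u' * e0 u'
          = (if u' = x then Γ.adjMat u u' else 0) + (if u' = z then -(Γ.adjMat u u') else 0) := by
        intro u'
        rw [hsplit u']
        by_cases h1 : u' = x
        · subst h1; simp [hxz]
        · by_cases h2 : u' = z <;> simp [h1, h2, hxz, Ne.symm hxz] <;> ring
      rw [Finset.sum_congr rfl fun u' _ => this u', Finset.sum_add_distrib,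
        Finset.sum_ite_eq' Finset.univ x (fun u' => Γ.adjMat u u'),
        Finset.sum_ite_eq' Finset.univ z (fun u' => -(Γ.adjMat u u'))]
      simp [sub_eq_add_neg]
    have hS : ∑ u, (Γ.adjMat.mulVec e0 u) * e0 u = -2 := by
      have hterm : ∀ u, (Γ.adjMat.mulVec e0 u) * e0 u
          = (if u = x then Γ.adjMat u x - Γ.adjMat u z else 0)
            + (if u = z then -(Γ.adjMat u x - Γ.adjMat u z) else 0) := by
        intro u
        rw [hmv u, hsplit u]
        by_cases h1 : u = x
        · subst h1; simp [hxz]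
        · by_cases h2 : u = z <;> simp [h1, h2, hxz, Ne.symm hxz] <;> ring
      rw [Finset.sum_congr rfl fun u _ => hterm u, Finset.sum_add_distrib,
        Finset.sum_ite_eq' Finset.univ x (fun u => Γ.adjMat u x - Γ.adjMat u z),
        Finset.sum_ite_eq' Finset.univ z (fun u => -(Γ.adjMat u x - Γ.adjMat u z))]
      rw [adjMat_self, adjMat_self, adjMat_of_adj Γ h, adjMat_of_adj Γ h.symm]
      simp
      ring
    have hN : ∑ u, e0 u * e0 u = 2 := by
      have hterm : ∀ u, e0 u * e0 u
          = (if u = x then (1:ℝ) else 0) + (if u = z then (1:ℝ) else 0) := by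
        intro u
        rw [hsplit u]
        by_cases h1 : u = x
        · subst h1; simp [hxz]
        · by_cases h2 : u = z <;> simp [h1, h2, hxz, Ne.symm hxz]
      rw [Finset.sum_congr rfl fun u _ => hterm u, Finset.sum_add_distrib,
        Finset.sum_ite_eq' Finset.univ x (fun _ => (1:ℝ)),
        Finset.sum_ite_eq' Finset.univ z (fun _ => (1:ℝ))]
      simp
      norm_num
    rw [hS, hN]
    norm_num
lemma adjMat_nonneg (Γ : DRG V) (u u' : V) : 0 ≤ Γ.adjMat u u' := by
  simp only [DRG.adjMat, SimpleGraph.adjMatrix_apply]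
  split <;> norm_num

lemma drg_degree (Γ : DRG V) (y : V) : Γ.G.degree y = Γ.k := by
  have h := Γ.count_b 0 y y (by simp)
  rw [DRG.k, ← h, Nat.card_eq_fintype_card, ← SimpleGraph.card_neighborFinset_eq_degree]
  rw [Fintype.card_subtype]
  congr 1
  ext z
  simp only [Finset.mem_filter, Finset.mem_univ, true_and, SimpleGraph.mem_neighborFinset,
    zero_add]
  constructor
  · intro h; exact ⟨h, (SimpleGraph.dist_eq_one_iff_adj).mpr h⟩
  · intro h; exact h.1

lemma drg_rowsum (Γ : DRG V) (u : V) : ∑ u', Γ.adjMat u u' = (Γ.k : ℝ) := by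
  rw [DRG.adjMat]
  simp only [SimpleGraph.adjMatrix_apply, Finset.sum_boole]
  rw [← SimpleGraph.neighborFinset_eq_filter, SimpleGraph.card_neighborFinset_eq_degree,
    drg_degree]

lemma adj_dist_le (Γ : DRG V) {x u u' : V} (h : Γ.G.Adj u u') :
    Γ.G.dist x u' ≤ Γ.G.dist x u + 1 := by
  have := Γ.conn.dist_triangle (u := x) (v := u) (w := u')
  rwa [SimpleGraph.dist_eq_one_iff_adj.mpr h] at this

lemma exists_dist_eq (Γ : DRG V) (x : V) :
    ∀ (d : ℕ) (y : V), Γ.G.dist x y = d → ∀ i ≤ d, ∃ z, Γ.G.dist x z = i := by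
  intro d
  induction d with
  | zero =>
    intro y h i hi
    interval_cases i
    exact ⟨x, by simp⟩
  | succ d ih =>
    intro y h i hi
    rcases Nat.lt_succ_iff_lt_or_eq.mp (Nat.lt_succ_of_le hi) with hlt | heq
    · -- i ≤ d : find z with dist x z = d
      obtain ⟨p, hp⟩ := (Γ.conn x y).exists_walk_length_eq_dist
      have hq : (p.reverse).length = d + 1 := by rw [SimpleGraph.Walk.length_reverse, hp, h]
      cases hq' : p.reverse with
      | nil => rw [hq'] at hq; simp at hq
      | cons hadj q =>
        rename_i z
        rw [hq'] at hq
        simp only [SimpleGraph.Walk.length_cons] at hq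
        have hq2 : q.length = d := by omega
        have h1 : Γ.G.dist x z ≤ d := by
          have := SimpleGraph.dist_le q.reverse
          rwa [SimpleGraph.Walk.length_reverse, hq2] at this
        have h2 : Γ.G.dist x y ≤ Γ.G.dist x z + 1 := adj_dist_le Γ hadj.symm
        rw [h] at h2
        have hz : Γ.G.dist x z = d := le_antisymm h1 (by omega)
        exact ih z hz i (by omega)
    · exact heq ▸ ⟨y, h⟩

lemma sum_adj_eq_b (Γ : DRG V) {x u : V} {i : ℕ} (hu : Γ.G.dist x u = i) :
    ∑ u' ∈ Finset.univ.filter (fun u' => Γ.G.dist x u' = i + 1), Γ.adjMat u u'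
      = (Γ.b i : ℝ) := by
  have h := Γ.count_b i x u hu
  rw [DRG.adjMat]
  simp only [SimpleGraph.adjMatrix_apply]
  rw [Finset.sum_filter]
  simp only [← ite_and]
  rw [Finset.sum_boole]
  norm_cast
  rw [← h, Nat.card_eq_fintype_card, Fintype.card_subtype]
  congr 1
  ext z
  simp only [Finset.mem_filter, Finset.mem_univ, true_and]
  tauto

lemma sum_adj_eq_c (Γ : DRG V) {x u' : V} {i : ℕ} (hu' : Γ.G.dist x u' = i + 1) :
    ∑ u ∈ Finset.univ.filter (fun u => Γ.G.dist x u = i), Γ.adjMat u' u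
      = (Γ.c (i + 1) : ℝ) := by
  have h := Γ.count_c (i + 1) x u' (Nat.le_add_left 1 i) hu'
  simp only [Nat.add_sub_cancel] at h
  rw [DRG.adjMat]
  simp only [SimpleGraph.adjMatrix_apply]
  rw [Finset.sum_filter]
  simp only [← ite_and]
  rw [Finset.sum_boole]
  norm_cast
  rw [← h, Nat.card_eq_fintype_card, Fintype.card_subtype]
  congr 1
  ext z
  simp only [Finset.mem_filter, Finset.mem_univ, true_and]
  tauto
lemma eig_lt_k (G : SimpleGraph V) (conn : G.Connected) (k : ℕ)
    (hdeg : ∀ u, G.degree u = k) {θ : ℝ} {v : V → ℝ}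
    (hv : (SimpleGraph.adjMatrix ℝ G).mulVec v = θ • v)
    (hsum : ∑ u, v u = 0) (hne : v ≠ 0) : θ < k := by
  have hVne : Nonempty V := not_isEmpty_iff.mp (fun h => hne (funext fun u => (h.false u).elim))
  obtain ⟨p, -, hp⟩ := Finset.univ.exists_max_image v ⟨Classical.arbitrary V, Finset.mem_univ _⟩
  set M := v p with hM
  have hMpos : 0 < M := by
    by_contra hle
    push_neg at hle
    have hall : ∀ u ∈ Finset.univ, v u ≤ 0 := fun u _ => le_trans (hp u (Finset.mem_univ u)) hle
    have h0 := (Finset.sum_eq_zero_iff_of_nonpos hall).mp hsum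
    exact hne (funext fun u => h0 u (Finset.mem_univ u))
  have hex : ∃ q, v q ≠ M := by
    by_contra hq
    push_neg at hq
    have hs : ∑ u, v u = (Fintype.card V : ℝ) * M := by
      rw [Finset.sum_congr rfl (fun u _ => hq u), Finset.sum_const, Finset.card_univ,
        nsmul_eq_mul]
    rw [hsum] at hs
    have hcard : 0 < (Fintype.card V : ℝ) := by exact_mod_cast Fintype.card_pos
    nlinarith
  obtain ⟨q, hqM⟩ := hex
  obtain ⟨w⟩ := conn p q
  obtain ⟨dart, -, hd1, hd2⟩ := w.exists_boundary_dart {u | v u = M} rfl hqM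
  have hadj : G.Adj dart.fst dart.snd := dart.adj
  have hva : v dart.fst = M := hd1
  have hvb : v dart.snd < M := lt_of_le_of_ne (hp _ (Finset.mem_univ _)) hd2
  have h1 : (SimpleGraph.adjMatrix ℝ G).mulVec v dart.fst = θ * M := by
    rw [hv]; simp [hva]
  have h2 : (SimpleGraph.adjMatrix ℝ G).mulVec v dart.fst
      = ∑ u ∈ G.neighborFinset dart.fst, v u := SimpleGraph.adjMatrix_mulVec_apply _ _ _
  have h3 : ∑ u ∈ G.neighborFinset dart.fst, v u
      < ∑ _u ∈ G.neighborFinset dart.fst, M := by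
    apply Finset.sum_lt_sum (fun u _ => hp u (Finset.mem_univ u))
    exact ⟨dart.snd, (SimpleGraph.mem_neighborFinset _ _ _).mpr hadj, hvb⟩
  have h4 : ∑ _u ∈ G.neighborFinset dart.fst, M = (k : ℝ) * M := by
    rw [Finset.sum_const, SimpleGraph.card_neighborFinset_eq_degree, hdeg, nsmul_eq_mul]
  have : θ * M < (k : ℝ) * M := by rw [← h1, h2] at *; linarith
  exact lt_of_mul_lt_mul_right (by linarith) (le_of_lt hMpos)
noncomputable def sumL : EuclideanSpace ℝ V →ₗ[ℝ] ℝ where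
  toFun w := ∑ u, w u
  map_add' a b := by simp [Finset.sum_add_distrib]
  map_smul' r a := by simp [Finset.mul_sum]

lemma exists_eig_max (A : Matrix V V ℝ) (k : ℕ)
    (hsym : ∀ u u', A u u' = A u' u)
    (hrow : ∀ u, ∑ u', A u u' = (k : ℝ))
    (v0 : V → ℝ) (hv0 : ∑ u, v0 u = 0) (hv0ne : v0 ≠ 0) :
    ∃ μ : ℝ, (∃ w : V → ℝ, w ≠ 0 ∧ (∑ u, w u = 0) ∧ A.mulVec w = μ • w) ∧
      ∀ (v : V → ℝ), (∑ u, v u = 0) → v ≠ 0 → ∀ cc : ℝ,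
        cc * (∑ u, v u * v u) ≤ ∑ u, (A.mulVec v u) * v u → cc ≤ μ := by
  set E := EuclideanSpace ℝ V
  set Tamb : E →ₗ[ℝ] E := Matrix.toEuclideanLin A with hTamb
  have key : ∀ (v : E) (u : V), Tamb v u = A.mulVec (fun t => v t) u := by
    intro v u
    rw [hTamb, Matrix.toEuclideanLin_apply]
  have hHerm : A.IsHermitian := by
    ext u u'
    simp [Matrix.conjTranspose_apply, hsym u u']
  have hsymm : Tamb.IsSymmetric := Matrix.isHermitian_iff_isSymmetric.mp hHerm
  set W : Submodule ℝ E := LinearMap.ker (sumL (V := V)) with hW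
  have hmemW : ∀ w : E, w ∈ W ↔ ∑ u, w u = 0 := fun w => LinearMap.mem_ker
  have hinv : ∀ w ∈ W, Tamb w ∈ W := by
    intro w hw
    rw [hmemW] at hw ⊢
    have h1 : ∀ u, Tamb w u = ∑ u', A u u' * w u' := fun u => key w u
    rw [Finset.sum_congr rfl fun u _ => h1 u, Finset.sum_comm]
    have h2 : ∀ u', ∑ u, A u u' * w u' = (k : ℝ) * w u' := by
      intro u'
      rw [← Finset.sum_mul]
      congr 1
      rw [Finset.sum_congr rfl fun u _ => hsym u u', hrow u']
    rw [Finset.sum_congr rfl fun u' _ => h2 u', ← Finset.mul_sum, hw, mul_zero]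
  set T : W →ₗ[ℝ] W := Tamb.restrict hinv with hT
  have hTsym : T.IsSymmetric := hsymm.restrict_invariant hinv
  have hv0W : (WithLp.toLp 2 v0 : E) ∈ W := (hmemW _).mpr hv0
  haveI : Nontrivial W := by
    refine nontrivial_of_ne ⟨(WithLp.toLp 2 v0 : E), hv0W⟩ 0 ?_
    intro hcon
    apply hv0ne
    funext u
    exact congrArg (fun (t : W) => (t : E) u) hcon
  set μ : ℝ := ⨆ x : {x : W // x ≠ 0}, RCLike.re (⟪T x, x⟫ : ℝ) / ‖(x : W)‖ ^ 2 with hμ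
  have hEigμ : Module.End.HasEigenvalue T μ := hTsym.hasEigenvalue_iSup_of_finiteDimensional
  obtain ⟨w, hw⟩ := hEigμ.exists_hasEigenvector
  have hweq : T w = μ • w := Module.End.mem_eigenspace_iff.mp hw.1
  have hwcoe : Tamb (w : E) = μ • (w : E) := by
    rw [← LinearMap.restrict_coe_apply Tamb hinv w, hweq]
    rfl
  refine ⟨μ, ⟨fun t => (w : E) t, ?_, (hmemW _).mp w.2, ?_⟩, ?_⟩
  · intro hcon
    apply hw.2
    apply Subtype.ext
    refine PiLp.ext fun u => ?_
    exact congrFun hcon u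
  · funext u
    rw [← key (w : E) u, hwcoe]
    rfl
  · -- rayleigh bound
    intro v hsum hne cc hcc
    have hBdd : BddAbove (Set.range fun x : {x : W // x ≠ 0} =>
        RCLike.re (⟪T x, x⟫ : ℝ) / ‖(x : W)‖ ^ 2) := by
      set Tc : W →L[ℝ] W := LinearMap.toContinuousLinearMap T with hTc
      refine ⟨‖Tc‖, ?_⟩
      rintro r ⟨z, rfl⟩
      have hz : (0 : ℝ) < ‖(z : W)‖ := norm_pos_iff.mpr z.prop
      have h1 : RCLike.re (⟪T z, z⟫ : ℝ) ≤ ‖T (z : W)‖ * ‖(z : W)‖ := by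
        rw [RCLike.re_to_real]
        exact real_inner_le_norm _ _
      have h2 : ‖T (z : W)‖ ≤ ‖Tc‖ * ‖(z : W)‖ := Tc.le_opNorm _
      rw [div_le_iff₀ (by positivity)]
      nlinarith
    set vE : E := WithLp.toLp 2 v with hvE
    have hvW : vE ∈ W := (hmemW _).mpr hsum
    have hvne' : (⟨vE, hvW⟩ : W) ≠ 0 := by
      intro hcon
      apply hne
      funext u
      exact congrArg (fun (t : W) => (t : E) u) hcon
    set xx : {x : W // x ≠ 0} := ⟨⟨vE, hvW⟩, hvne'⟩ with hxx
    have hle : RCLike.re (⟪T xx, xx⟫ : ℝ) / ‖((xx : {x : W // x ≠ 0}) : W)‖ ^ 2 ≤ μ :=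
      le_ciSup hBdd xx
    have hNpos : (0 : ℝ) < ∑ u, v u * v u := by
      obtain ⟨u0, hu0⟩ : ∃ u, v u ≠ 0 := by
        by_contra hcon
        push_neg at hcon
        exact hne (funext hcon)
      apply Finset.sum_pos' (fun u _ => mul_self_nonneg (v u))
      exact ⟨u0, Finset.mem_univ u0, mul_self_pos.mpr hu0⟩
    have hTvE : ∀ u, Tamb vE u = A.mulVec v u := fun u => key vE u
    have hinner : (⟪T (xx : W), (xx : W)⟫ : ℝ) = ∑ u, (A.mulVec v u) * v u := by
      rw [Submodule.coe_inner]
      rw [show (((T (xx : W)) : W) : E) = Tamb vE from LinearMap.restrict_coe_apply _ _ _]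
      rw [PiLp.inner_apply]
      apply Finset.sum_congr rfl
      intro u _
      simp only [RCLike.inner_apply, starRingEnd_apply, star_trivial]
      rw [hTvE u]
      exact mul_comm _ _
    have hnorm : ‖((xx : {x : W // x ≠ 0}) : W)‖ ^ 2 = ∑ u, v u * v u := by
      have h0 : ‖((xx : {x : W // x ≠ 0}) : W)‖ = ‖vE‖ := by
        rw [← Submodule.norm_coe]
      rw [h0, ← real_inner_self_eq_norm_sq, PiLp.inner_apply]
      apply Finset.sum_congr rfl
      intro u _
      simp only [RCLike.inner_apply, starRingEnd_apply, star_trivial]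
      rfl
    rw [RCLike.re_to_real, hinner, hnorm] at hle
    calc cc ≤ (∑ u, (A.mulVec v u) * v u) / (∑ u, v u * v u) := by
          rw [le_div_iff₀ hNpos]; linarith
      _ ≤ μ := hle
set_option maxHeartbeats 2000000 in
lemma step_vec (Γ : DRG V) (x : V) (i : ℕ)
    (hsh : ∃ z, Γ.G.dist x z = i + 1)
    (v : V → ℝ)
    (hv : v = fun u => if Γ.G.dist x u ≤ i
      then ((Finset.univ.filter (fun t => ¬ Γ.G.dist x t ≤ i)).card : ℝ)
      else -((Finset.univ.filter (fun t => Γ.G.dist x t ≤ i)).card : ℝ)) :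
    (∑ u, v u = 0) ∧ v ≠ 0 ∧
      ((Γ.k : ℝ) - (Γ.b i : ℝ) - (Γ.c (i+1) : ℝ)) * (∑ u, v u * v u)
        ≤ ∑ u, (Γ.adjMat.mulVec v u) * v u := by
  set P : V → Prop := fun u => Γ.G.dist x u ≤ i with hP
  set U : Finset V := Finset.univ.filter (fun u => P u) with hU
  set Uc : Finset V := Finset.univ.filter (fun u => ¬ P u) with hUc
  set Si : Finset V := Finset.univ.filter (fun u => Γ.G.dist x u = i) with hSi
  set Si1 : Finset V := Finset.univ.filter (fun u => Γ.G.dist x u = i + 1) with hSi1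
  set m : ℕ := U.card with hm
  set m' : ℕ := Uc.card with hm'
  have hvU : ∀ u ∈ U, v u = (m' : ℝ) := by
    intro u hu
    rw [hv]
    exact if_pos ((Finset.mem_filter.mp hu).2)
  have hvUc : ∀ u ∈ Uc, v u = -(m : ℝ) := by
    intro u hu
    rw [hv]
    exact if_neg ((Finset.mem_filter.mp hu).2)
  have hxU : x ∈ U := Finset.mem_filter.mpr ⟨Finset.mem_univ x, by simp [hP, SimpleGraph.dist_self]⟩
  obtain ⟨z2, hz2⟩ := hsh
  have hz2Uc : z2 ∈ Uc := Finset.mem_filter.mpr ⟨Finset.mem_univ z2, by simp [hP, hz2]⟩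
  have hmpos : 0 < m := Finset.card_pos.mpr ⟨x, hxU⟩
  have hm'pos : 0 < m' := Finset.card_pos.mpr ⟨z2, hz2Uc⟩
  -- row sums
  set rowU : V → ℝ := fun u => ∑ u' ∈ U, Γ.adjMat u u' with hrowU
  set rowC : V → ℝ := fun u => ∑ u' ∈ Uc, Γ.adjMat u u' with hrowC
  have hsplitrow : ∀ u, rowU u + rowC u = (Γ.k : ℝ) := by
    intro u
    rw [hrowU, hrowC]
    rw [Finset.sum_filter_add_sum_filter_not Finset.univ P (fun u' => Γ.adjMat u u')]
    exact drg_rowsum Γ u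
  -- E
  set E : ℝ := ∑ u ∈ U, rowC u with hE
  have hSiU : Si ⊆ U := fun u hu => Finset.mem_filter.mpr
    ⟨Finset.mem_univ u, le_of_eq (Finset.mem_filter.mp hu).2⟩
  have hSi1Uc : Si1 ⊆ Uc := fun u hu => Finset.mem_filter.mpr
    ⟨Finset.mem_univ u, by
      have := (Finset.mem_filter.mp hu).2
      simp only [hP]
      omega⟩
  have hESi : E = ∑ u ∈ Si, rowC u := by
    rw [hE]
    refine (Finset.sum_subset hSiU ?_).symm
    intro u huU huSi
    have hdu : Γ.G.dist x u ≤ i ∧ Γ.G.dist x u ≠ i := by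
      constructor
      · exact (Finset.mem_filter.mp huU).2
      · intro hcon
        exact huSi (Finset.mem_filter.mpr ⟨Finset.mem_univ u, hcon⟩)
    apply Finset.sum_eq_zero
    intro u' hu'
    apply adjMat_of_not_adj
    intro hadj
    have h1 : Γ.G.dist x u' ≤ Γ.G.dist x u + 1 := adj_dist_le Γ hadj
    have h2 : ¬ P u' := (Finset.mem_filter.mp hu').2
    simp only [hP] at h2
    omega
  have hrowCSi : ∀ u ∈ Si, rowC u = ∑ u' ∈ Si1, Γ.adjMat u u' := by
    intro u hu
    have hdu : Γ.G.dist x u = i := (Finset.mem_filter.mp hu).2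
    refine (Finset.sum_subset hSi1Uc ?_).symm
    intro u' hu'Uc hu'Si1
    have h2 : ¬ P u' := (Finset.mem_filter.mp hu'Uc).2
    simp only [hP] at h2
    have h3 : Γ.G.dist x u' ≠ i + 1 := by
      intro hcon
      exact hu'Si1 (Finset.mem_filter.mpr ⟨Finset.mem_univ u', hcon⟩)
    apply adjMat_of_not_adj
    intro hadj
    have h1 : Γ.G.dist x u' ≤ Γ.G.dist x u + 1 := adj_dist_le Γ hadj
    omega
  have hEb : E = (Si.card : ℝ) * (Γ.b i : ℝ) := by
    rw [hESi, Finset.sum_congr rfl hrowCSi]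
    rw [Finset.sum_congr rfl (fun u hu => sum_adj_eq_b Γ (Finset.mem_filter.mp hu).2)]
    rw [Finset.sum_const, nsmul_eq_mul]
  have hEc : E = (Si1.card : ℝ) * (Γ.c (i+1) : ℝ) := by
    rw [hESi, Finset.sum_congr rfl hrowCSi, Finset.sum_comm (f := Γ.adjMat)]
    rw [Finset.sum_congr rfl (fun u' hu' => ?_), Finset.sum_const, nsmul_eq_mul]
    rw [Finset.sum_congr rfl (fun u _ => adjMat_symm Γ u u')]
    exact sum_adj_eq_c Γ (Finset.mem_filter.mp hu').2
  have hE0 : 0 ≤ E := by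
    rw [hE]
    exact Finset.sum_nonneg fun u _ => Finset.sum_nonneg fun u' _ => adjMat_nonneg Γ u u'
  have hcardSi : (Si.card : ℝ) ≤ (m : ℝ) := by
    exact_mod_cast Nat.cast_le.mpr (Finset.card_le_card hSiU)
  have hcardSi1 : (Si1.card : ℝ) ≤ (m' : ℝ) := by
    exact_mod_cast Nat.cast_le.mpr (Finset.card_le_card hSi1Uc)
  have hEb' : E ≤ (m : ℝ) * (Γ.b i : ℝ) := by
    rw [hEb]
    exact mul_le_mul_of_nonneg_right hcardSi (Nat.cast_nonneg _)
  have hEc' : E ≤ (m' : ℝ) * (Γ.c (i+1) : ℝ) := by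
    rw [hEc]
    exact mul_le_mul_of_nonneg_right hcardSi1 (Nat.cast_nonneg _)
  -- block sums
  have hUU : ∑ u ∈ U, rowU u = (m : ℝ) * (Γ.k : ℝ) - E := by
    have : ∀ u ∈ U, rowU u = (Γ.k : ℝ) - rowC u := fun u _ => by
      have := hsplitrow u; linarith
    rw [Finset.sum_congr rfl this, Finset.sum_sub_distrib, Finset.sum_const, nsmul_eq_mul, ← hE]
  have hCU : ∑ u ∈ Uc, rowU u = E := by
    rw [hE, hrowU, hrowC, Finset.sum_comm (f := Γ.adjMat)]
    exact Finset.sum_congr rfl fun u _ => Finset.sum_congr rfl fun u' _ => adjMat_symm Γ u' u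
  have hCC : ∑ u ∈ Uc, rowC u = (m' : ℝ) * (Γ.k : ℝ) - E := by
    have h1 : ∀ u ∈ Uc, rowC u = (Γ.k : ℝ) - rowU u := fun u _ => by
      have := hsplitrow u; linarith
    rw [Finset.sum_congr rfl h1, Finset.sum_sub_distrib, Finset.sum_const, nsmul_eq_mul, hCU]
  -- the three sums
  have hsumv : ∑ u, v u = 0 := by
    rw [← Finset.sum_filter_add_sum_filter_not Finset.univ P v]
    rw [← hU, ← hUc]
    rw [Finset.sum_congr (rfl : U = U) hvU]
    rw [Finset.sum_congr (rfl : Uc = Uc) hvUc]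
    rw [Finset.sum_const, Finset.sum_const, nsmul_eq_mul, nsmul_eq_mul]
    ring
  have hvne : v ≠ 0 := by
    intro hcon
    have := congrFun hcon x
    rw [hvU x hxU] at this
    simp only [Pi.zero_apply] at this
    exact_mod_cast absurd this (by positivity)
  have hvUP : ∀ u, P u → v u = (m' : ℝ) := fun u h => by rw [hv]; exact if_pos h
  have hvUcP : ∀ u, ¬ P u → v u = -(m : ℝ) := fun u h => by rw [hv]; exact if_neg h
  have hmv : ∀ u, Γ.adjMat.mulVec v u = (m' : ℝ) * rowU u - (m : ℝ) * rowC u := by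
    intro u
    rw [mulVec_sum]
    rw [← Finset.sum_filter_add_sum_filter_not Finset.univ P (fun u' => Γ.adjMat u u' * v u')]
    rw [← hU, ← hUc]
    rw [Finset.sum_congr (rfl : U = U) (fun u' hu' => by rw [hvU u' hu'])]
    rw [Finset.sum_congr (rfl : Uc = Uc) (fun u' hu' => by rw [hvUc u' hu'])]
    rw [← Finset.sum_mul, ← Finset.sum_mul]
    show rowU u * (m' : ℝ) + rowC u * (-(m : ℝ)) = _
    ring
  have hN : ∑ u, v u * v u = (m : ℝ) * (m' : ℝ)^2 + (m' : ℝ) * (m : ℝ)^2 := by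
    rw [← Finset.sum_filter_add_sum_filter_not Finset.univ P (fun u => v u * v u)]
    rw [← hU, ← hUc]
    rw [Finset.sum_congr (rfl : U = U) (fun u hu => by rw [hvU u hu])]
    rw [Finset.sum_congr (rfl : Uc = Uc) (fun u hu => by rw [hvUc u hu])]
    rw [Finset.sum_const, Finset.sum_const, nsmul_eq_mul, nsmul_eq_mul]
    ring
  have hS : ∑ u, (Γ.adjMat.mulVec v u) * v u
      = (Γ.k : ℝ) * ((m : ℝ) * (m' : ℝ)^2 + (m' : ℝ) * (m : ℝ)^2)
        - E * ((m : ℝ) + (m' : ℝ))^2 := by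
    rw [← Finset.sum_filter_add_sum_filter_not Finset.univ P
      (fun u => (Γ.adjMat.mulVec v u) * v u)]
    rw [← hU, ← hUc]
    rw [Finset.sum_congr (rfl : U = U) (fun u hu => by rw [hmv u, hvU u hu])]
    rw [Finset.sum_congr (rfl : Uc = Uc) (fun u hu => by rw [hmv u, hvUc u hu])]
    have e1 : ∑ u ∈ U, ((m' : ℝ) * rowU u - (m : ℝ) * rowC u) * (m' : ℝ)
        = ((m' : ℝ) * ((m : ℝ) * (Γ.k : ℝ) - E) - (m : ℝ) * E) * (m' : ℝ) := by
      rw [← Finset.sum_mul, Finset.sum_sub_distrib, ← Finset.mul_sum, ← Finset.mul_sum,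
        hUU, ← hE]
    have e2 : ∑ u ∈ Uc, ((m' : ℝ) * rowU u - (m : ℝ) * rowC u) * (-(m : ℝ))
        = ((m' : ℝ) * E - (m : ℝ) * ((m' : ℝ) * (Γ.k : ℝ) - E)) * (-(m : ℝ)) := by
      rw [← Finset.sum_mul, Finset.sum_sub_distrib, ← Finset.mul_sum, ← Finset.mul_sum,
        hCU, hCC]
    rw [e1, e2]
    ring
  refine ⟨hsumv, hvne, ?_⟩
  rw [hN, hS]
  have hb0 : (0:ℝ) ≤ (Γ.b i : ℝ) := Nat.cast_nonneg _
  have hc0 : (0:ℝ) ≤ (Γ.c (i+1) : ℝ) := Nat.cast_nonneg _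
  have hmr : (1:ℝ) ≤ (m : ℝ) := by exact_mod_cast hmpos
  have hmr' : (1:ℝ) ≤ (m' : ℝ) := by exact_mod_cast hm'pos
  have hstep : 0 ≤ ((Γ.b i : ℝ) + (Γ.c (i+1) : ℝ)) * (m : ℝ) * (m' : ℝ)
      - E * ((m : ℝ) + (m' : ℝ)) := by nlinarith
  nlinarith [mul_nonneg (by linarith : (0:ℝ) ≤ (m : ℝ) + (m' : ℝ)) hstep]
end DRGaux


theorem second_eigenvalue_diagonal_bound {V : Type} [Fintype V] [DecidableEq V]
    (Γ : DRG V) (hD : 1 ≤ Γ.diam)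
    (θ1 : ℝ) (hEig : Γ.IsEig θ1) (hlt : θ1 < (Γ.k : ℝ))
    (hmax : ∀ θ : ℝ, Γ.IsEig θ → θ < (Γ.k : ℝ) → θ ≤ θ1) :
    -1 ≤ θ1 ∧
    ∀ i : ℕ, 1 ≤ i → i + 1 ≤ Γ.diam →
      (Γ.k : ℝ) - (Γ.b i : ℝ) - (Γ.c (i + 1) : ℝ) ≤ θ1 := by
  classical
  obtain ⟨x, y, hxy⟩ := Γ.dist_attained
  have hrow : ∀ u, ∑ u', Γ.adjMat u u' = (Γ.k : ℝ) := DRGaux.drg_rowsum Γ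
  have hsym : ∀ u u', Γ.adjMat u u' = Γ.adjMat u' u := DRGaux.adjMat_symm Γ
  obtain ⟨z1, hz1⟩ := DRGaux.exists_dist_eq Γ x Γ.diam y hxy 1 hD
  have hadj1 : Γ.G.Adj x z1 := SimpleGraph.dist_eq_one_iff_adj.mp hz1
  set e0 : V → ℝ := fun u => if u = x then 1 else if u = z1 then -1 else 0 with he0
  obtain ⟨he0sum, he0ne, he0ray⟩ := DRGaux.edge_vec Γ hadj1 e0 he0
  obtain ⟨μ, ⟨w, hwne, hwsum, hweig⟩, hkey⟩ :=
    DRGaux.exists_eig_max Γ.adjMat Γ.k hsym hrow e0 he0sum he0ne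
  have hdeg : ∀ u, Γ.G.degree u = Γ.k := DRGaux.drg_degree Γ
  have hμk : μ < (Γ.k : ℝ) := DRGaux.eig_lt_k Γ.G Γ.conn Γ.k hdeg hweig hwsum hwne
  have hIsEig : Γ.IsEig μ := ⟨w, hwne, hweig⟩
  have hμθ : μ ≤ θ1 := hmax μ hIsEig hμk
  constructor
  · exact le_trans (hkey e0 he0sum he0ne (-1) he0ray) hμθ
  · intro i h1i hi1
    have hsh : ∃ z, Γ.G.dist x z = i + 1 := DRGaux.exists_dist_eq Γ x Γ.diam y hxy (i+1) hi1
    set v : V → ℝ := fun u => if Γ.G.dist x u ≤ i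
      then ((Finset.univ.filter (fun t => ¬ Γ.G.dist x t ≤ i)).card : ℝ)
      else -((Finset.univ.filter (fun t => Γ.G.dist x t ≤ i)).card : ℝ) with hv
    obtain ⟨hvsum, hvne, hvray⟩ := DRGaux.step_vec Γ x i hsh v hv
    exact le_trans (hkey v hvsum hvne _ hvray) hμθ
end
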